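/- arXiv:1806.04496 — 8 statements merged into one kernel-verified Lean document; each statement's English description precedes it below -/
import Mathlib

section
/- Every compact strictly convex geodesic space is uniformly convex. -/
open Metric Set

/-- A geodesic joining `x` to `y`, parameterized on `[0, dist x y]`. -/
def IsGeodesic {X : Type*} [MetricSpace X] (x y : X) (γ : ℝ → X) : Prop :=
  γ 0 = x ∧ γ (dist x y) = y ∧
    ∀ s ∈ Set.Icc (0:ℝ) (dist x y), ∀ t ∈ Set.Icc (0:ℝ) (dist x y),
      dist (γ s) (γ t) = |s - t|

/-- A geodesic space: every two points are joined by a geodesic. -/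
def GeodesicSpace (X : Type*) [MetricSpace X] : Prop :=
  ∀ x y : X, ∃ γ : ℝ → X, IsGeodesic x y γ

/-- A uniquely geodesic space: every two points are joined by exactly one geodesic. -/
def UniquelyGeodesic (X : Type*) [MetricSpace X] : Prop :=
  ∀ x y : X, (∃ γ : ℝ → X, IsGeodesic x y γ) ∧
    ∀ γ₁ γ₂ : ℝ → X, IsGeodesic x y γ₁ → IsGeodesic x y γ₂ →
      Set.EqOn γ₁ γ₂ (Set.Icc 0 (dist x y))

/-- `m` is a midpoint of `x` and `y`. -/
def IsMidpoint {X : Type*} [MetricSpace X] (m x y : X) : Prop :=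
  dist m x = dist x y / 2 ∧ dist m y = dist x y / 2

/-- Strict convexity of a geodesic space. -/
def StrictlyConvexGS (X : Type*) [MetricSpace X] : Prop :=
  ∀ z x y m : X, x ≠ y → IsMidpoint m x y →
    dist z m < max (dist z x) (dist z y)

/-- Uniform convexity of a geodesic space. -/
def UniformlyConvexGS (X : Type*) [MetricSpace X] : Prop :=
  ∀ ε ∈ Set.Ioc (0:ℝ) 2, ∀ r > (0:ℝ), ∃ δ ∈ Set.Ioc (0:ℝ) 1,
    ∀ z x y m : X, IsMidpoint m x y →
      dist z x ≤ r → dist z y ≤ r → ε * r ≤ dist x y →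
        dist z m ≤ (1 - δ) * r

/-- `seg x y` is the geodesic segment with endpoints `x` and `y`
(the image of a geodesic joining `x` to `y`). -/
def IsSegSystem {X : Type*} [MetricSpace X] (seg : X → X → Set X) : Prop :=
  ∀ x y : X, ∃ γ : ℝ → X, IsGeodesic x y γ ∧
    seg x y = γ '' Set.Icc 0 (dist x y)

/-- `comb t x y` is the point `(1-t)x + ty` on the segment `seg x y`. -/
def IsCombSystem {X : Type*} [MetricSpace X] (seg : X → X → Set X)
    (comb : ℝ → X → X → X) : Prop :=
  ∀ t ∈ Set.Icc (0:ℝ) 1, ∀ x y : X,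
    comb t x y ∈ seg x y ∧ dist (comb t x y) x = t * dist x y ∧
      dist (comb t x y) y = (1 - t) * dist x y

/-- `Φ` is a modulus of uniform uniqueness for the segments `seg`. -/
def UniqModulus {X : Type*} [MetricSpace X] (seg : X → X → Set X)
    (Φ : ℝ → ℝ → ℝ) : Prop :=
  ∀ ε > (0:ℝ), ∀ b > (0:ℝ), ∀ x y z : X,
    ∀ r₁ ∈ Set.Ioc (0:ℝ) b, ∀ r₂ ∈ Set.Ioc (0:ℝ) b,
      dist z x ≤ r₁ → dist z y ≤ r₂ + Φ ε b → r₁ + r₂ ≤ dist x y →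
        Metric.infDist z (seg x y) < ε

/-- `Θ` is a modulus of uniform betweenness for the segments `seg`. -/
def BtwModulus {X : Type*} [MetricSpace X] (seg : X → X → Set X)
    (Θ : ℝ → ℝ → ℝ → ℝ) : Prop :=
  ∀ ε > (0:ℝ), ∀ a > (0:ℝ), ∀ b > (0:ℝ), ∀ x y z w : X,
    (∀ u ∈ ({x, y, z, w} : Set X), ∀ v ∈ ({x, y, z, w} : Set X), u ≠ v → a ≤ dist u v) →
    (∀ u ∈ ({x, y, z, w} : Set X), ∀ v ∈ ({x, y, z, w} : Set X), dist u v ≤ b) →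
    Metric.infDist y (seg x z) < Θ ε a b → Metric.infDist z (seg y w) < Θ ε a b →
      Metric.infDist y (seg x w) < ε ∧ Metric.infDist z (seg x w) < ε

/-
For fixed `ε` and `r` the configurations `(z, x, y, m)` with `m` a midpoint of `x, y`,
`d(z, x), d(z, y) ≤ r` and `d(x, y) ≥ ε r` form a closed, hence compact, subset of `X⁴`. On it
strict convexity gives `d(z, m) < r` (as `x ≠ y`), so the continuous function `d(z, m)` attains a
maximum `M < r`, and `δ = 1 - M / r` works.
-/

theorem IsCompact.exists_forall_le_lt {α : Type*} [TopologicalSpace α] {K : Set α}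
    (hK : IsCompact K) {f : α → ℝ} (hf : ContinuousOn f K) {r : ℝ} (hlt : ∀ a ∈ K, f a < r) :
    ∃ M < r, ∀ a ∈ K, f a ≤ M := by
  rcases K.eq_empty_or_nonempty with rfl | hne
  · exact ⟨r - 1, by linarith, by simp⟩
  · obtain ⟨a₀, ha₀, hmax⟩ := hK.exists_isMaxOn hne hf
    exact ⟨f a₀, hlt a₀ ha₀, hmax⟩

section

variable {X : Type*} [MetricSpace X]

theorem uniformlyConvexGS_of_exists_lt
    (h : ∀ ε ∈ Ioc (0 : ℝ) 2, ∀ r > (0 : ℝ), ∃ M < r, ∀ z x y m : X, IsMidpoint m x y →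
      dist z x ≤ r → dist z y ≤ r → ε * r ≤ dist x y → dist z m ≤ M) :
    UniformlyConvexGS X := by
  intro ε hε r hr
  obtain ⟨M, hMr, hM⟩ := h ε hε r hr
  have hM' : max M 0 < r := max_lt hMr hr
  refine ⟨(r - max M 0) / r, ⟨div_pos (by linarith) hr, (div_le_one hr).2 (by simp)⟩, ?_⟩
  intro z x y m hm hzx hzy hxy
  calc dist z m ≤ max M 0 := (hM z x y m hm hzx hzy hxy).trans (le_max_left M 0)
    _ = (1 - (r - max M 0) / r) * r := by field_simp; ring

theorem isClosed_setOf_isMidpoint {α : Type*} [TopologicalSpace α] {m x y : α → X}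
    (hm : Continuous m) (hx : Continuous x) (hy : Continuous y) :
    IsClosed {a | IsMidpoint (m a) (x a) (y a)} :=
  (isClosed_eq (by fun_prop) (by fun_prop)).inter (isClosed_eq (by fun_prop) (by fun_prop))

/-- The configurations `(z, x, y, m)` constrained by uniform convexity at `ε` and `r`. -/
def midpointConfigs (X : Type*) [MetricSpace X] (ε r : ℝ) : Set (X × X × X × X) :=
  {p | IsMidpoint p.2.2.2 p.2.1 p.2.2.1 ∧ dist p.1 p.2.1 ≤ r ∧ dist p.1 p.2.2.1 ≤ r ∧
    ε * r ≤ dist p.2.1 p.2.2.1}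

theorem isClosed_midpointConfigs (ε r : ℝ) : IsClosed (midpointConfigs X ε r) := by
  have hz : Continuous fun p : X × X × X × X => p.1 := by fun_prop
  have hx : Continuous fun p : X × X × X × X => p.2.1 := by fun_prop
  have hy : Continuous fun p : X × X × X × X => p.2.2.1 := by fun_prop
  have hm : Continuous fun p : X × X × X × X => p.2.2.2 := by fun_prop
  exact (isClosed_setOf_isMidpoint hm hx hy).inter <|
    (isClosed_le (hz.dist hx) continuous_const).inter <|
      (isClosed_le (hz.dist hy) continuous_const).inter (isClosed_le continuous_const (hx.dist hy))

theorem StrictlyConvexGS.dist_lt_of_mem_midpointConfigs (hsc : StrictlyConvexGS X) {ε r : ℝ}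
    (hε : 0 < ε) (hr : 0 < r) {p : X × X × X × X} (hp : p ∈ midpointConfigs X ε r) :
    dist p.1 p.2.2.2 < r := by
  obtain ⟨hmid, hzx, hzy, hxy⟩ := hp
  have hne : p.2.1 ≠ p.2.2.1 := dist_pos.1 ((mul_pos hε hr).trans_le hxy)
  exact (hsc _ _ _ _ hne hmid).trans_le (max_le hzx hzy)

end

theorem compact_strictlyConvex_uniformlyConvex_general {X : Type*} [MetricSpace X]
    [CompactSpace X] (hsc : StrictlyConvexGS X) :
    UniformlyConvexGS X := by
  refine uniformlyConvexGS_of_exists_lt fun ε hε r hr => ?_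
  obtain ⟨M, hMr, hM⟩ := (isClosed_midpointConfigs ε r).isCompact.exists_forall_le_lt
    (by fun_prop : Continuous fun p : X × X × X × X => dist p.1 p.2.2.2).continuousOn
    fun p hp => hsc.dist_lt_of_mem_midpointConfigs hε.1 hr hp
  exact ⟨M, hMr, fun z x y m hm hzx hzy hxy => hM (z, x, y, m) ⟨hm, hzx, hzy, hxy⟩⟩

/-- Every compact strictly convex geodesic space is uniformly convex. -/
theorem compact_strictlyConvex_uniformlyConvex {X : Type*} [MetricSpace X]
    [CompactSpace X] (hgeo : GeodesicSpace X) (hsc : StrictlyConvexGS X) :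
    UniformlyConvexGS X :=
  compact_strictlyConvex_uniformlyConvex_general hsc
end

section
/- Every compact uniquely geodesic metric space is uniformly uniquely geodesic: for all ε,b>0 there exists φ>0 such that for all x,y,z∈X and all r₁,r₂∈(0,b], if d(z,x)≤r₁, d(z,y)≤r₂+φ and d(x,y)≥r₁+r₂, then dist(z,[x,y])<ε, where [x,y] denotes the unique geodesic segment from x to y. -/
open Metric Set

/-! A point `z` with `d(x,z) + d(z,y) = d(x,y)` lies on a geodesic from `x` to `y`
(concatenate geodesics `x → z → y`), so in a uniquely geodesic space it is the point of `[x,y]`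
at distance `d(x,z)` from `x`. The configurations `(x, y, z, p)` with `p` the point of `[x,y]` at
distance `min (d(x,z)) (d(x,y))` from `x` and `d(z,p) ≥ ε` form a closed, hence compact, set
described by distance equations alone (no continuity of `[x,y]` in `x, y` is needed), and the
continuous excess `d(x,z) + d(z,y) - d(x,y)` is positive on it; a positive lower bound for the
excess serves as `φ`. -/

section Geodesic

variable {X : Type*} [MetricSpace X]

theorem IsGeodesic.of_dist_le {x y : X} {γ : ℝ → X} (h0 : γ 0 = x) (h1 : γ (dist x y) = y)
    (hle : ∀ s ∈ Icc 0 (dist x y), ∀ t ∈ Icc 0 (dist x y), s ≤ t →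
      dist (γ s) (γ t) ≤ t - s) :
    IsGeodesic x y γ := by
  have key : ∀ s ∈ Icc 0 (dist x y), ∀ t ∈ Icc 0 (dist x y), s ≤ t →
      dist (γ s) (γ t) = t - s := by
    intro s hs t ht hst
    have hx := hle 0 ⟨le_rfl, dist_nonneg⟩ s hs hs.1
    have hy := hle t ht (dist x y) ⟨dist_nonneg, le_rfl⟩ ht.2
    rw [h0] at hx
    rw [h1] at hy
    have := dist_triangle4 x (γ s) (γ t) y
    linarith [hle s hs t ht hst]
  refine ⟨h0, h1, fun s hs t ht => ?_⟩
  rcases le_total s t with hst | hts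
  · rw [key s hs t ht hst, abs_of_nonpos (by linarith)]
    ring
  · rw [dist_comm, key t ht s hs hts, abs_of_nonneg (by linarith)]

theorem IsGeodesic.append {x w y : X} {α β : ℝ → X} (hα : IsGeodesic x w α)
    (hβ : IsGeodesic w y β) (h : dist x w + dist w y = dist x y) :
    IsGeodesic x y (fun t => if t ≤ dist x w then α t else β (t - dist x w)) := by
  obtain ⟨hα0, hα1, hαd⟩ := hα
  obtain ⟨hβ0, hβ1, hβd⟩ := hβ
  set a := dist x w
  have ha : 0 ≤ a := dist_nonneg
  have hwy : 0 ≤ dist w y := dist_nonneg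
  refine IsGeodesic.of_dist_le (by simp [ha, hα0]) ?_ fun s hs t ht hst => ?_
  · rcases eq_or_lt_of_le hwy with hwy0 | hwy0
    · rw [← dist_eq_zero.mp hwy0.symm, if_pos (by linarith)]
      simpa [← h, ← hwy0] using hα1
    · rw [if_neg (by linarith), ← h, add_sub_cancel_left, hβ1]
  · split_ifs with hs' ht' ht'
    · rw [hαd s ⟨hs.1, hs'⟩ t ⟨ht.1, ht'⟩, abs_of_nonpos (by linarith)]
      linarith
    · calc dist (α s) (β (t - a)) ≤ dist (α s) (α a) + dist (β 0) (β (t - a)) := by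
            rw [hα1, hβ0]
            exact dist_triangle _ _ _
        _ = t - s := by
            rw [hαd s ⟨hs.1, hs'⟩ a ⟨ha, le_rfl⟩,
              hβd 0 ⟨le_rfl, hwy⟩ (t - a) ⟨by linarith, by linarith [ht.2]⟩,
              abs_of_nonpos (by linarith), abs_of_nonpos (by linarith)]
            ring
    · linarith
    · rw [hβd (s - a) ⟨by linarith, by linarith [hs.2]⟩ (t - a)
        ⟨by linarith, by linarith [ht.2]⟩, abs_of_nonpos (by linarith)]
      linarith

theorem UniquelyGeodesic.eq_of_dist_add_dist_eq (huniq : UniquelyGeodesic X) {x y z p : X}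
    (hz : dist x z + dist z y = dist x y) (hp : dist x p + dist p y = dist x y)
    (hzp : dist x z = dist x p) : z = p := by
  obtain ⟨α, hα⟩ := (huniq x z).1
  obtain ⟨β, hβ⟩ := (huniq z y).1
  obtain ⟨α', hα'⟩ := (huniq x p).1
  obtain ⟨β', hβ'⟩ := (huniq p y).1
  have hmem : dist x z ∈ Icc 0 (dist x y) :=
    ⟨dist_nonneg, by linarith [dist_nonneg (x := z) (y := y)]⟩
  have heq := (huniq x y).2 _ _ (hα.append hβ hz) (hα'.append hβ' hp) hmem
  simp only [le_refl, if_true, hzp] at heq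
  rw [← hα'.2.1, ← heq, ← hzp, hα.2.1]

theorem IsSegSystem.exists_mem_dist_eq {seg : X → X → Set X} (hseg : IsSegSystem seg)
    (x y : X) {t : ℝ} (ht : t ∈ Icc 0 (dist x y)) :
    ∃ p ∈ seg x y, dist x p = t ∧ dist p y = dist x y - t := by
  obtain ⟨γ, ⟨hγ0, hγ1, hγd⟩, hsegxy⟩ := hseg x y
  refine ⟨γ t, hsegxy ▸ mem_image_of_mem γ ht, ?_, ?_⟩
  · rw [← hγ0, hγd 0 ⟨le_rfl, dist_nonneg⟩ t ht, abs_sub_comm,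
      abs_of_nonneg (by linarith [ht.1])]
    ring
  · conv_lhs => rw [← hγ1]
    rw [hγd t ht _ ⟨dist_nonneg, le_rfl⟩, abs_of_nonpos (by linarith [ht.2])]
    ring

theorem UniquelyGeodesic.exists_pos_dist_lt_of_dist_add_dist_lt [CompactSpace X]
    (huniq : UniquelyGeodesic X) {ε : ℝ} (hε : 0 < ε) :
    ∃ δ > 0, ∀ x y z p : X, dist x p + dist p y = dist x y →
      dist x p = min (dist x z) (dist x y) → dist x z + dist z y < dist x y + δ →
        dist z p < ε := by
  let excess : X × X × X × X → ℝ := fun q =>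
    dist q.1 q.2.2.1 + dist q.2.2.1 q.2.1 - dist q.1 q.2.1
  let bad : Set (X × X × X × X) := {q |
    dist q.1 q.2.2.2 + dist q.2.2.2 q.2.1 = dist q.1 q.2.1 ∧
    dist q.1 q.2.2.2 = min (dist q.1 q.2.2.1) (dist q.1 q.2.1) ∧ ε ≤ dist q.2.2.1 q.2.2.2}
  have hbad : IsClosed bad := by
    simp only [bad, ofPred_and]
    exact (isClosed_eq (by fun_prop) (by fun_prop)).inter
      ((isClosed_eq (by fun_prop) (by fun_prop)).inter (isClosed_le (by fun_prop) (by fun_prop)))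
  have hpos : ∀ q ∈ bad, 0 < excess q := by
    rintro ⟨x, y, z, p⟩ ⟨hp, hmin, hzp⟩
    refine lt_of_le_of_ne (by simpa [excess] using dist_triangle x z y) fun h0 => ?_
    have hz : dist x z + dist z y = dist x y := by simp only [excess] at h0; linarith
    have hxz : dist x z ≤ dist x y := by linarith [dist_nonneg (x := z) (y := y)]
    have := huniq.eq_of_dist_add_dist_eq hz hp (by rw [hmin, min_eq_left hxz])
    rw [this, dist_self] at hzp
    linarith
  obtain ⟨δ, hδ, hδle⟩ := hbad.isCompact.exists_forall_le' (by fun_prop) hpos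
  refine ⟨δ, hδ, fun x y z p hp hmin hlt => ?_⟩
  by_contra! hzp
  have := hδle (x, y, z, p) ⟨hp, hmin, hzp⟩
  simp only [excess] at this
  linarith

end Geodesic

/-- Every compact uniquely geodesic metric space is uniformly uniquely geodesic. -/
theorem compact_uniquelyGeodesic_uniformlyUniquelyGeodesic {X : Type*} [MetricSpace X]
    [CompactSpace X] (huniq : UniquelyGeodesic X)
    (seg : X → X → Set X) (hseg : IsSegSystem seg) :
    ∀ ε > (0:ℝ), ∀ b > (0:ℝ), ∃ φ > (0:ℝ), ∀ x y z : X,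
      ∀ r₁ ∈ Set.Ioc (0:ℝ) b, ∀ r₂ ∈ Set.Ioc (0:ℝ) b,
        dist z x ≤ r₁ → dist z y ≤ r₂ + φ → r₁ + r₂ ≤ dist x y →
          Metric.infDist z (seg x y) < ε := by
  intro ε hε b _
  obtain ⟨δ, hδ, hclose⟩ := huniq.exists_pos_dist_lt_of_dist_add_dist_lt hε
  refine ⟨δ / 2, half_pos hδ, fun x y z r₁ _ r₂ _ hzx hzy hxy => ?_⟩
  obtain ⟨p, hpseg, hxp, hpy⟩ := hseg.exists_mem_dist_eq x y
    (t := min (dist x z) (dist x y)) ⟨le_min dist_nonneg dist_nonneg, min_le_right _ _⟩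
  calc infDist z (seg x y) ≤ dist z p := infDist_le_dist_of_mem hpseg
    _ < ε := hclose x y z p (by linarith) hxp (by rw [dist_comm x z]; linarith)
end

section
/- Let (X,d) be a uniformly convex geodesic space admitting a monotone modulus of uniform convexity η (nonincreasing in the second argument). Then X is uniformly uniquely geodesic, and Φ(ε,b) = ε·η(ε/(b+ε), b+ε) is a modulus of uniform uniqueness: for all ε,b>0, all x,y,z∈X and r₁,r₂∈(0,b], if d(z,x)≤r₁, d(z,y)≤r₂+Φ(ε,b) and d(x,y)≥r₁+r₂, then dist(z,[x,y])<ε. -/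
/-!
Uniform convexity makes the midpoint `m` of two points strictly closer to any centre than the
farther of the two. Two distinct geodesics from `x` to `y` would give two points `p ≠ q` at time
`t` whose midpoint `m` has `d(x,m) < t` and `d(y,m) < d(x,y) - t`, contradicting the triangle
inequality. For the modulus, if `z` stays `ε`-far from `[x,y]`, take `p ∈ [x,y]` with
`d(p,y) = r₂` and let `m` be the midpoint of `z` and `p`. Applying the modulus at the common radius
`b + ε` (allowed by monotonicity) around `x` and around `y` shrinks both distances by the factor
`1 - η`, and the triangle inequality through `m` then forces `d(x,y) < ε`, which is absurd.
-/

open Metric Set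

def IsUniformConvexityModulus (X : Type*) [MetricSpace X] (η : ℝ → ℝ → ℝ) : Prop :=
  ∀ ε ∈ Ioc (0:ℝ) 2, ∀ r > (0:ℝ), η ε r ∈ Ioc (0:ℝ) 1 ∧
    ∀ z x y m : X, IsMidpoint m x y →
      dist z x ≤ r → dist z y ≤ r → ε * r ≤ dist x y → dist z m ≤ (1 - η ε r) * r

section

variable {X : Type*} [MetricSpace X]

theorem IsGeodesic.dist_left {x y : X} {γ : ℝ → X} (h : IsGeodesic x y γ) {t : ℝ}
    (ht : t ∈ Icc 0 (dist x y)) : dist x (γ t) = t := by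
  rw [← h.1, h.2.2 0 ⟨le_rfl, dist_nonneg⟩ t ht, zero_sub, abs_neg, abs_of_nonneg ht.1]

theorem IsGeodesic.dist_right {x y : X} {γ : ℝ → X} (h : IsGeodesic x y γ) {t : ℝ}
    (ht : t ∈ Icc 0 (dist x y)) : dist y (γ t) = dist x y - t := by
  rw [← h.2.1, h.2.2 _ ⟨dist_nonneg, le_rfl⟩ t ht, h.2.1, abs_of_nonneg (sub_nonneg.2 ht.2)]

theorem GeodesicSpace.exists_midpoint (hgeo : GeodesicSpace X) (x y : X) :
    ∃ m, IsMidpoint m x y := by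
  obtain ⟨γ, hγ⟩ := hgeo x y
  have ht : dist x y / 2 ∈ Icc 0 (dist x y) := by
    constructor <;> linarith [dist_nonneg (x := x) (y := y)]
  refine ⟨γ (dist x y / 2), ?_, ?_⟩
  · rw [dist_comm, hγ.dist_left ht]
  · rw [dist_comm, hγ.dist_right ht]
    ring

theorem StrictlyConvexGS.uniquelyGeodesic (hconv : StrictlyConvexGS X)
    (hgeo : GeodesicSpace X) : UniquelyGeodesic X := by
  intro x y
  refine ⟨hgeo x y, fun γ₁ γ₂ h₁ h₂ t ht => ?_⟩
  by_contra hne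
  obtain ⟨m, hm⟩ := hgeo.exists_midpoint (γ₁ t) (γ₂ t)
  have hx := hconv x _ _ m hne hm
  have hy := hconv y _ _ m hne hm
  rw [h₁.dist_left ht, h₂.dist_left ht, max_self] at hx
  rw [h₁.dist_right ht, h₂.dist_right ht, max_self] at hy
  linarith [dist_triangle_right x y m]

namespace IsUniformConvexityModulus

variable {η : ℝ → ℝ → ℝ}

theorem strictlyConvexGS (hη : IsUniformConvexityModulus X η) : StrictlyConvexGS X := by
  intro z x y m hxy hm
  set r := max (dist z x) (dist z y)
  have hdxy : 0 < dist x y := dist_pos.2 hxy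
  have hle : dist x y ≤ 2 * r := by
    linarith [dist_triangle_left x y z, le_max_left (dist z x) (dist z y),
      le_max_right (dist z x) (dist z y)]
  have hr : 0 < r := by linarith
  have hε : dist x y / r ∈ Ioc 0 2 := ⟨div_pos hdxy hr, (div_le_iff₀ hr).2 hle⟩
  obtain ⟨hδ, hzm⟩ := hη _ hε r hr
  calc dist z m ≤ (1 - η (dist x y / r) r) * r :=
        hzm z x y m hm (le_max_left _ _) (le_max_right _ _) (div_mul_cancel₀ _ hr.ne').le
    _ < r := by nlinarith [hδ.1]

theorem dist_midpoint_le_of_le (hη : IsUniformConvexityModulus X η) {ε r R : ℝ}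
    (hε : ε ∈ Ioc (0:ℝ) 2) (hanti : AntitoneOn (η ε) (Ioi 0)) (hr : 0 < r) (hrR : r ≤ R)
    {z x y m : X} (hm : IsMidpoint m x y) (hzx : dist z x ≤ r) (hzy : dist z y ≤ r)
    (hxy : ε * R ≤ dist x y) : dist z m ≤ (1 - η ε R) * r :=
  calc dist z m ≤ (1 - η ε r) * r :=
        (hη ε hε r hr).2 z x y m hm hzx hzy
          ((mul_le_mul_of_nonneg_left hrR hε.1.le).trans hxy)
    _ ≤ (1 - η ε R) * r := by
        gcongr
        exact hanti hr (hr.trans_le hrR) hrR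

theorem min_dist_lt (hη : IsUniformConvexityModulus X η) (hgeo : GeodesicSpace X)
    {ε b r₁ r₂ : ℝ} (hε : 0 < ε) (hanti : AntitoneOn (η (ε / (b + ε))) (Ioi 0))
    (hr₁ : r₁ ∈ Ioc 0 b) (hr₂ : r₂ ∈ Ioc 0 b) {x y z p : X}
    (hxp : dist x p = dist x y - r₂) (hyp : dist y p = r₂) (hzx : dist z x ≤ r₁)
    (hzy : dist z y ≤ r₂ + ε * η (ε / (b + ε)) (b + ε)) (hxy : r₁ + r₂ ≤ dist x y) :
    min (dist z x) (dist z p) < ε := by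
  by_contra! hfar
  obtain ⟨hεx, hεp⟩ := le_min_iff.1 hfar
  set s := dist x y
  set η₀ := η (ε / (b + ε)) (b + ε)
  have hbε : 0 < b + ε := by linarith [hr₁.1, hr₁.2]
  have hε₀ : ε / (b + ε) ∈ Ioc (0:ℝ) 2 :=
    ⟨div_pos hε hbε, (div_le_iff₀ hbε).2 (by linarith [hr₁.1, hr₁.2])⟩
  have hεzp : ε / (b + ε) * (b + ε) ≤ dist z p := by rwa [div_mul_cancel₀ _ hbε.ne']
  have hη₀ : η₀ ∈ Ioc (0:ℝ) 1 := (hη _ hε₀ _ hbε).1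
  have hεη₀ : ε * η₀ ≤ ε := mul_le_of_le_one_right hε.le hη₀.2
  have hs : s ≤ r₁ + r₂ + ε * η₀ := by linarith [dist_triangle_left x y z]
  obtain ⟨m, hm⟩ := hgeo.exists_midpoint z p
  have hxm : dist x m ≤ (1 - η₀) * (s - r₂) :=
    hη.dist_midpoint_le_of_le hε₀ hanti (by linarith [hr₁.1]) (by linarith [hr₁.2])
      hm (by rw [dist_comm]; linarith) hxp.le hεzp
  have hym : dist y m ≤ (1 - η₀) * (r₂ + ε * η₀) :=
    hη.dist_midpoint_le_of_le hε₀ hanti (by nlinarith [hr₂.1, hη₀.1]) (by linarith [hr₂.2])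
      hm (by rwa [dist_comm]) (by nlinarith [hyp, hη₀.1]) hεzp
  -- Summing: `s ≤ (1 - η₀) (s + ε η₀)`, i.e. `η₀ s ≤ ε η₀ (1 - η₀) < ε η₀`, while `s > ε`.
  have hsε : ε < s := by linarith [hr₂.1]
  nlinarith [dist_triangle_right x y m, mul_lt_mul_of_pos_left hsε hη₀.1, mul_pos hε hη₀.1,
    mul_pos hη₀.1 (mul_pos hε hη₀.1)]

theorem uniqModulus (hη : IsUniformConvexityModulus X η) (hgeo : GeodesicSpace X)
    (hanti : ∀ ε ∈ Ioc (0:ℝ) 2, AntitoneOn (η ε) (Ioi 0)) {seg : X → X → Set X}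
    (hseg : IsSegSystem seg) : UniqModulus seg (fun ε b => ε * η (ε / (b + ε)) (b + ε)) := by
  intro ε hε b hb x y z r₁ hr₁ r₂ hr₂ hzx hzy hxy
  have hbε : 0 < b + ε := by linarith
  have hε₀ : ε / (b + ε) ∈ Ioc (0:ℝ) 2 :=
    ⟨div_pos hε hbε, (div_le_iff₀ hbε).2 (by linarith)⟩
  obtain ⟨γ, hγ, hseg_eq⟩ := hseg x y
  have ht : dist x y - r₂ ∈ Icc 0 (dist x y) := ⟨by linarith [hr₁.1], by linarith [hr₂.1]⟩
  have hx : x ∈ seg x y := hseg_eq ▸ ⟨0, ⟨le_rfl, dist_nonneg⟩, hγ.1⟩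
  have hp : γ (dist x y - r₂) ∈ seg x y := hseg_eq ▸ mem_image_of_mem γ ht
  calc infDist z (seg x y) ≤ min (dist z x) (dist z (γ (dist x y - r₂))) :=
        le_min (infDist_le_dist_of_mem hx) (infDist_le_dist_of_mem hp)
    _ < ε := hη.min_dist_lt hgeo hε (hanti _ hε₀) hr₁ hr₂ (hγ.dist_left ht)
        (by rw [hγ.dist_right ht]; ring) hzx hzy hxy

end IsUniformConvexityModulus

end

/-- A uniformly convex geodesic space with a monotone modulus of uniform convexity `η`
is uniformly uniquely geodesic, with modulus of uniform uniqueness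
`Φ(ε,b) = ε * η (ε/(b+ε)) (b+ε)`. -/
theorem uniformlyConvex_uniformlyUniquelyGeodesic {X : Type*} [MetricSpace X]
    (hgeo : GeodesicSpace X) (η : ℝ → ℝ → ℝ)
    (hη : ∀ ε ∈ Set.Ioc (0:ℝ) 2, ∀ r > (0:ℝ), η ε r ∈ Set.Ioc (0:ℝ) 1 ∧
      ∀ z x y m : X, IsMidpoint m x y →
        dist z x ≤ r → dist z y ≤ r → ε * r ≤ dist x y →
          dist z m ≤ (1 - η ε r) * r)
    (hmono : ∀ ε ∈ Set.Ioc (0:ℝ) 2, ∀ r r' : ℝ, 0 < r → r ≤ r' → η ε r' ≤ η ε r)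
    (seg : X → X → Set X) (hseg : IsSegSystem seg) :
    UniquelyGeodesic X ∧
      UniqModulus seg (fun ε b => ε * η (ε / (b + ε)) (b + ε)) := by
  have hη : IsUniformConvexityModulus X η := hη
  have hanti : ∀ ε ∈ Ioc (0:ℝ) 2, AntitoneOn (η ε) (Ioi 0) :=
    fun ε hε r hr _ _ hrr' => hmono ε hε r _ hr hrr'
  exact ⟨hη.strictlyConvexGS.uniquelyGeodesic hgeo, hη.uniqModulus hgeo hanti hseg⟩
end

section
/- For 1<p≤2, the function Φ(ε,b) = ((p−1)/8)·ε²/(b+ε) is a modulus of uniform uniqueness for any L_p space over a measurable space: for all ε,b>0, all points x,y,z and all r₁,r₂∈(0,b], if ‖z−x‖≤r₁, ‖z−y‖≤r₂+Φ(ε,b) and ‖x−y‖≥r₁+r₂, then dist(z,[x,y])<ε. -/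
/-!
Hanner's pointwise inequality `α(r)|a|^p + β(r)|b|^p ≤ |a + b|^p + |a - b|^p`
(`1 < p ≤ 2`, `0 < r ≤ 1`) integrates to the same inequality for `L_p` norms. Applied to
`(u + v)/2` and `(u - v)/2` with `r = ε/2`, it shows that `‖u‖, ‖v‖ ≤ R` and `‖u - v‖ ≥ εR` force
`‖(u + v)/2‖ ≤ (1 - (p-1)ε²/8) R`.

For the geometric statement, let `m ∈ [x, y]` be the point with `dist m x = r₁`. If `z` were
`ε`-far from `[x, y]`, the midpoint of `z` and `m` would lie within `r₁` of `x`, hence at distance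
at least `r₂` from `y`; but `z` and `m` lie in the ball of radius `R = r₂ + Φ(ε, b)` about `y`, so
uniform convexity puts their midpoint within `R - (p-1)ε²/(8R) < r₂` of `y`.
-/

open Metric Set MeasureTheory

theorem ConcaveOn.add_le_add_of_mem_Icc {s : Set ℝ} {f : ℝ → ℝ} (hf : ConcaveOn ℝ s f)
    {a b c d : ℝ} (ha : a ∈ s) (hb : b ∈ s) (hc : c ∈ Icc a b) (hcd : c + d = a + b) :
    f a + f b ≤ f c + f d := by
  rw [← segment_eq_Icc (hc.1.trans hc.2)] at hc
  obtain ⟨θ, τ, hθ, hτ, hθτ, rfl⟩ := hc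
  have hd : τ • a + θ • b = d := by
    simp only [smul_eq_mul] at hcd ⊢
    linear_combination (a + b) * hθτ - hcd
  have h₁ := hf.2 ha hb hθ hτ hθτ
  have h₂ := hf.2 ha hb hτ hθ (by linarith)
  rw [hd] at h₂
  simp only [smul_eq_mul] at h₁ h₂
  linear_combination h₁ + h₂ - (f a + f b) * hθτ

theorem rpow_add_rpow_le_of_mem_Icc {s a b c d : ℝ} (hs₀ : 0 ≤ s) (hs₁ : s ≤ 1) (ha : 0 ≤ a)
    (hc : c ∈ Icc a b) (hcd : c + d = a + b) : a ^ s + b ^ s ≤ c ^ s + d ^ s :=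
  (Real.concaveOn_rpow hs₀ hs₁).add_le_add_of_mem_Icc ha (ha.trans (hc.1.trans hc.2)) hc hcd

noncomputable def hannerAlpha (p r : ℝ) : ℝ := (1 + r) ^ (p - 1) + (1 - r) ^ (p - 1)

noncomputable def hannerBeta (p r : ℝ) : ℝ := ((1 + r) ^ (p - 1) - (1 - r) ^ (p - 1)) / r ^ (p - 1)

theorem hannerBeta_monotoneOn {p : ℝ} (hp1 : 1 ≤ p) (hp2 : p ≤ 2) :
    MonotoneOn (hannerBeta p) (Ioc 0 1) := by
  intro t ⟨ht0, ht1⟩ t' ⟨ht'0, ht'1⟩ htt'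
  rw [hannerBeta, hannerBeta, div_le_div_iff₀ (by positivity) (by positivity), sub_mul, sub_mul,
    ← Real.mul_rpow (by linarith) ht'0.le, ← Real.mul_rpow (by linarith) ht'0.le,
    ← Real.mul_rpow (by linarith) ht0.le, ← Real.mul_rpow (by linarith) ht0.le]
  have := rpow_add_rpow_le_of_mem_Icc (s := p - 1) (by linarith) (by linarith)
    (a := (1 - t') * t) (b := (1 + t) * t') (c := (1 - t) * t') (d := (1 + t') * t)
    (by nlinarith) ⟨by nlinarith, by nlinarith⟩ (by ring)
  linarith

theorem hannerBeta_one {p : ℝ} (hp : 1 < p) : hannerBeta p 1 = 2 ^ (p - 1) := by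
  simp [hannerBeta, Real.zero_rpow (by linarith : p - 1 ≠ 0), one_add_one_eq_two]

theorem hannerBeta_nonneg {p r : ℝ} (hp : 1 ≤ p) (hr0 : 0 ≤ r) (hr1 : r ≤ 1) :
    0 ≤ hannerBeta p r := by
  have : (1 - r) ^ (p - 1) ≤ (1 + r) ^ (p - 1) :=
    Real.rpow_le_rpow (by linarith) (by linarith) (by linarith)
  exact div_nonneg (by linarith) (by positivity)

theorem hannerAlpha_le_two {p r : ℝ} (hp1 : 1 ≤ p) (hp2 : p ≤ 2) (hr0 : 0 ≤ r) (hr1 : r ≤ 1) :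
    hannerAlpha p r ≤ 2 := by
  have := rpow_add_rpow_le_of_mem_Icc (s := p - 1) (by linarith) (by linarith)
    (a := 1 - r) (b := 1 + r) (c := 1) (d := 1) (by linarith) ⟨by linarith, by linarith⟩ (by ring)
  rw [Real.one_rpow] at this
  rw [hannerAlpha]
  linarith

theorem two_rpow_le_hannerAlpha {p r : ℝ} (hp1 : 1 < p) (hp2 : p ≤ 2) (hr0 : 0 ≤ r) (hr1 : r ≤ 1) :
    2 ^ (p - 1) ≤ hannerAlpha p r := by
  have := rpow_add_rpow_le_of_mem_Icc (s := p - 1) (by linarith) (by linarith)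
    (a := 0) (b := 2) (c := 1 - r) (d := 1 + r) le_rfl ⟨by linarith, by linarith⟩ (by ring)
  rw [Real.zero_rpow (by linarith)] at this
  rw [hannerAlpha]
  linarith

theorem hannerBeta_le_hannerAlpha {p r : ℝ} (hp1 : 1 < p) (hp2 : p ≤ 2) (hr0 : 0 < r)
    (hr1 : r ≤ 1) : hannerBeta p r ≤ hannerAlpha p r :=
  calc hannerBeta p r ≤ hannerBeta p 1 :=
        hannerBeta_monotoneOn hp1.le hp2 ⟨hr0, hr1⟩ ⟨one_pos, le_rfl⟩ hr1
    _ = 2 ^ (p - 1) := hannerBeta_one hp1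
    _ ≤ hannerAlpha p r := two_rpow_le_hannerAlpha hp1 hp2 hr0.le hr1

theorem rpow_eq_rpow_sub_one_mul {p x : ℝ} (hp : p ≠ 0) (hx : 0 ≤ x) : x ^ p = x ^ (p - 1) * x := by
  rw [← Real.rpow_add_one' hx (by simpa using hp), sub_add_cancel]

theorem hannerAlpha_add_hannerBeta_mul_rpow_self {p r : ℝ} (hp : 1 < p) (hr0 : 0 < r)
    (hr1 : r ≤ 1) : hannerAlpha p r + hannerBeta p r * r ^ p = (1 + r) ^ p + (1 - r) ^ p := by
  have hp0 : p ≠ 0 := by positivity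
  rw [hannerAlpha, hannerBeta, rpow_eq_rpow_sub_one_mul hp0 hr0.le,
    rpow_eq_rpow_sub_one_mul hp0 (by linarith : 0 ≤ 1 + r),
    rpow_eq_rpow_sub_one_mul hp0 (by linarith : 0 ≤ 1 - r)]
  field_simp
  ring

theorem monotoneOn_Icc_of_hasDerivAt_nonneg {f f' : ℝ → ℝ} {a b : ℝ}
    (hf : ContinuousOn f (Icc a b)) (hf' : ∀ x ∈ Ioo a b, HasDerivAt f (f' x) x)
    (hf'₀ : ∀ x ∈ Ioo a b, 0 ≤ f' x) : MonotoneOn f (Icc a b) :=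
  monotoneOn_of_hasDerivWithinAt_nonneg (convex_Icc a b) hf
    (by simpa only [interior_Icc] using fun x hx ↦ (hf' x hx).hasDerivWithinAt)
    (by simpa only [interior_Icc] using hf'₀)

theorem antitoneOn_Icc_of_hasDerivAt_nonpos {f f' : ℝ → ℝ} {a b : ℝ}
    (hf : ContinuousOn f (Icc a b)) (hf' : ∀ x ∈ Ioo a b, HasDerivAt f (f' x) x)
    (hf'₀ : ∀ x ∈ Ioo a b, f' x ≤ 0) : AntitoneOn f (Icc a b) :=
  antitoneOn_of_hasDerivWithinAt_nonpos (convex_Icc a b) hf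
    (by simpa only [interior_Icc] using fun x hx ↦ (hf' x hx).hasDerivWithinAt)
    (by simpa only [interior_Icc] using hf'₀)

theorem hasDerivAt_one_add_rpow (q : ℝ) {x : ℝ} (hx : -1 < x) :
    HasDerivAt (fun t ↦ (1 + t) ^ q) (q * (1 + x) ^ (q - 1)) x := by
  simpa using ((hasDerivAt_id x).const_add 1).rpow_const (p := q) (Or.inl (by simp; linarith))

theorem hasDerivAt_one_sub_rpow (q : ℝ) {x : ℝ} (hx : x < 1) :
    HasDerivAt (fun t ↦ (1 - t) ^ q) (-(q * (1 - x) ^ (q - 1))) x := by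
  simpa using ((hasDerivAt_id x).const_sub 1).rpow_const (p := q) (Or.inl (by simp; linarith))

theorem two_mul_mul_le_one_add_rpow_sub_one_sub_rpow {q t : ℝ} (hq0 : 0 ≤ q) (hq1 : q ≤ 1)
    (ht0 : 0 ≤ t) (ht1 : t ≤ 1) : 2 * q * t ≤ (1 + t) ^ q - (1 - t) ^ q := by
  let k : ℝ → ℝ := fun t ↦ (1 + t) ^ q - (1 - t) ^ q - 2 * q * t
  have hk : MonotoneOn k (Icc 0 1) := by
    refine monotoneOn_Icc_of_hasDerivAt_nonneg (by fun_prop (disch := exact hq0))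
      (fun x hx ↦ (((hasDerivAt_one_add_rpow q (by linarith [hx.1])).sub
        (hasDerivAt_one_sub_rpow q hx.2)).sub ((hasDerivAt_id x).const_mul (2 * q))))
      fun x ⟨hx0, hx1⟩ ↦ ?_
    -- AM-GM: the two powers have product `(1 - x ^ 2) ^ (q - 1) ≥ 1`
    have hprod : 1 ≤ (1 + x) ^ (q - 1) * (1 - x) ^ (q - 1) := by
      rw [← Real.mul_rpow (by linarith) (by linarith)]
      exact Real.one_le_rpow_of_pos_of_le_one_of_nonpos (by nlinarith) (by nlinarith) (by linarith)
    have hsum : 2 ≤ (1 + x) ^ (q - 1) + (1 - x) ^ (q - 1) := by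
      have : 0 < (1 + x) ^ (q - 1) := by positivity
      have : 0 < (1 - x) ^ (q - 1) := Real.rpow_pos_of_pos (by linarith) _
      nlinarith [sq_nonneg ((1 + x) ^ (q - 1) - (1 - x) ^ (q - 1))]
    simp only [mul_one]
    nlinarith
  have := hk ⟨le_rfl, zero_le_one⟩ ⟨ht0, ht1⟩ ht0
  simp only [k] at this
  norm_num at this
  linarith

theorem two_add_mul_sq_le_one_add_rpow_add_one_sub_rpow {p t : ℝ} (hp1 : 1 < p) (hp2 : p ≤ 2)
    (ht0 : 0 ≤ t) (ht1 : t ≤ 1) : 2 + p * (p - 1) * t ^ 2 ≤ (1 + t) ^ p + (1 - t) ^ p := by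
  let h : ℝ → ℝ := fun t ↦ (1 + t) ^ p + (1 - t) ^ p - p * (p - 1) * t ^ 2
  have hh : MonotoneOn h (Icc 0 1) := by
    refine monotoneOn_Icc_of_hasDerivAt_nonneg
      (by fun_prop (disch := exact (by linarith : (0:ℝ) ≤ p)))
      (fun x hx ↦ (((hasDerivAt_one_add_rpow p (by linarith [hx.1])).add
        (hasDerivAt_one_sub_rpow p hx.2)).sub ((hasDerivAt_pow 2 x).const_mul (p * (p - 1)))))
      fun x ⟨hx0, hx1⟩ ↦ ?_
    have := two_mul_mul_le_one_add_rpow_sub_one_sub_rpow (q := p - 1) (by linarith) (by linarith)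
      hx0.le hx1.le
    norm_num
    nlinarith [mul_le_mul_of_nonneg_left this (by linarith : (0:ℝ) ≤ p)]
  have := hh ⟨le_rfl, zero_le_one⟩ ⟨ht0, ht1⟩ ht0
  simp only [h] at this
  norm_num [Real.zero_rpow] at this
  linarith

theorem hannerAlpha_add_hannerBeta_mul_rpow_le {p r t : ℝ} (hp1 : 1 < p) (hp2 : p ≤ 2)
    (hr0 : 0 < r) (hr1 : r ≤ 1) (ht0 : 0 ≤ t) (ht1 : t ≤ 1) :
    hannerAlpha p r + hannerBeta p r * t ^ p ≤ (1 + t) ^ p + (1 - t) ^ p := by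
  let G : ℝ → ℝ := fun t ↦ (1 + t) ^ p + (1 - t) ^ p - hannerBeta p r * t ^ p
  have hGc : ContinuousOn G (Icc 0 1) := by fun_prop (disch := exact (by linarith : (0:ℝ) ≤ p))
  -- as `hannerBeta p` is monotone, `G` decreases on `[0, r]` and increases on `[r, 1]`
  have hG' : ∀ x ∈ Ioo (0:ℝ) 1,
      HasDerivAt G (p * x ^ (p - 1) * (hannerBeta p x - hannerBeta p r)) x := by
    intro x ⟨hx0, hx1⟩
    refine (((hasDerivAt_one_add_rpow p (by linarith)).add (hasDerivAt_one_sub_rpow p hx1)).sub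
      ((Real.hasDerivAt_rpow_const (Or.inl hx0.ne')).const_mul (hannerBeta p r))).congr_deriv ?_
    have : x ^ (p - 1) ≠ 0 := by positivity
    unfold hannerBeta
    field_simp
    ring
  have hβ := hannerBeta_monotoneOn hp1.le hp2
  have hGr : G r = hannerAlpha p r := by
    simp only [G, ← hannerAlpha_add_hannerBeta_mul_rpow_self hp1 hr0 hr1]
    ring
  suffices G r ≤ G t by simp only [G] at this; linarith
  rcases le_total t r with htr | hrt
  · refine antitoneOn_Icc_of_hasDerivAt_nonpos (hGc.mono (Icc_subset_Icc_right hr1))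
      (fun x hx ↦ hG' x ⟨hx.1, hx.2.trans_le hr1⟩) (fun x ⟨hx0, hxr⟩ ↦ ?_)
      ⟨ht0, htr⟩ ⟨hr0.le, le_rfl⟩ htr
    have := hβ ⟨hx0, hxr.le.trans hr1⟩ ⟨hr0, hr1⟩ hxr.le
    exact mul_nonpos_of_nonneg_of_nonpos (by positivity) (by linarith)
  · refine monotoneOn_Icc_of_hasDerivAt_nonneg (hGc.mono (Icc_subset_Icc_left hr0.le))
      (fun x hx ↦ hG' x ⟨hr0.trans hx.1, hx.2⟩) (fun x ⟨hrx, hx1⟩ ↦ ?_)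
      ⟨le_rfl, hr1⟩ ⟨hrt, ht1⟩ hrt
    have := hβ ⟨hr0, hr1⟩ ⟨hr0.trans hrx, hx1.le⟩ hrx.le
    have : 0 < x := hr0.trans hrx
    exact mul_nonneg (by positivity) (by linarith)

theorem hannerAlpha_add_hannerBeta_mul_abs_rpow_le {p r t : ℝ} (hp1 : 1 < p) (hp2 : p ≤ 2)
    (hr0 : 0 < r) (hr1 : r ≤ 1) (ht : |t| ≤ 1) :
    hannerAlpha p r + hannerBeta p r * |t| ^ p ≤ |1 + t| ^ p + |1 - t| ^ p := by
  have h := hannerAlpha_add_hannerBeta_mul_rpow_le hp1 hp2 hr0 hr1 (abs_nonneg t) ht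
  obtain ⟨ht₁, ht₂⟩ := abs_le.1 ht
  rcases le_total 0 t with h0 | h0
  · rw [abs_of_nonneg h0] at h
    rwa [abs_of_nonneg h0, abs_of_nonneg (by linarith : 0 ≤ 1 + t),
      abs_of_nonneg (by linarith : 0 ≤ 1 - t)]
  · rw [abs_of_nonpos h0, sub_neg_eq_add, ← sub_eq_add_neg] at h
    rw [abs_of_nonpos h0, abs_of_nonneg (by linarith : 0 ≤ 1 + t),
      abs_of_nonneg (by linarith : 0 ≤ 1 - t)]
    linarith

theorem hannerAlpha_mul_add_hannerBeta_mul_le_of_abs_le {p r a b : ℝ} (hp1 : 1 < p) (hp2 : p ≤ 2)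
    (hr0 : 0 < r) (hr1 : r ≤ 1) (hba : |b| ≤ |a|) :
    hannerAlpha p r * |a| ^ p + hannerBeta p r * |b| ^ p ≤ |a + b| ^ p + |a - b| ^ p := by
  rcases eq_or_ne a 0 with rfl | ha
  · obtain rfl : b = 0 := abs_nonpos_iff.1 (by simpa using hba)
    simp [Real.zero_rpow (by linarith : p ≠ 0)]
  have habs : ∀ u, |a * u| ^ p = |a| ^ p * |u| ^ p := fun u ↦ by
    rw [abs_mul, Real.mul_rpow (abs_nonneg a) (abs_nonneg u)]
  have key := hannerAlpha_add_hannerBeta_mul_abs_rpow_le (t := b / a) hp1 hp2 hr0 hr1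
    (by rwa [abs_div, div_le_one (abs_pos.2 ha)])
  have hb : |b| ^ p = |a| ^ p * |b / a| ^ p := by rw [← habs, mul_div_cancel₀ b ha]
  calc hannerAlpha p r * |a| ^ p + hannerBeta p r * |b| ^ p
      = |a| ^ p * (hannerAlpha p r + hannerBeta p r * |b / a| ^ p) := by rw [hb]; ring
    _ ≤ |a| ^ p * (|1 + b / a| ^ p + |1 - b / a| ^ p) :=
        mul_le_mul_of_nonneg_left key (by positivity)
    _ = |a + b| ^ p + |a - b| ^ p := by
        rw [mul_add, ← habs, ← habs, mul_add, mul_sub, mul_one, mul_div_cancel₀ b ha]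

theorem hannerAlpha_mul_add_hannerBeta_mul_le {p r : ℝ} (hp1 : 1 < p) (hp2 : p ≤ 2)
    (hr0 : 0 < r) (hr1 : r ≤ 1) (a b : ℝ) :
    hannerAlpha p r * |a| ^ p + hannerBeta p r * |b| ^ p ≤ |a + b| ^ p + |a - b| ^ p := by
  rcases le_total |b| |a| with hba | hab
  · exact hannerAlpha_mul_add_hannerBeta_mul_le_of_abs_le hp1 hp2 hr0 hr1 hba
  -- since `β ≤ α`, moving the weight `α` onto the larger of `|a|, |b|` only increases the sum
  have hswap := hannerAlpha_mul_add_hannerBeta_mul_le_of_abs_le hp1 hp2 hr0 hr1 hab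
  rw [add_comm b a, abs_sub_comm] at hswap
  have hβα := hannerBeta_le_hannerAlpha hp1 hp2 hr0 hr1
  have hpow : |a| ^ p ≤ |b| ^ p := Real.rpow_le_rpow (abs_nonneg a) hab (by linarith)
  nlinarith [mul_nonneg (sub_nonneg.2 hβα) (sub_nonneg.2 hpow)]

theorem le_mul_of_hannerAlpha_mul_add_hannerBeta_mul_le {p r R A B : ℝ} (hp1 : 1 < p)
    (hp2 : p ≤ 2) (hr0 : 0 < r) (hr1 : r ≤ 1) (hR : 0 < R) (hA : 0 ≤ A) (hB : r * R ≤ B)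
    (h : hannerAlpha p r * A ^ p + hannerBeta p r * B ^ p ≤ 2 * R ^ p) :
    A ≤ (1 - (p - 1) * r ^ 2 / 2) * R := by
  have hα2 := hannerAlpha_le_two hp1.le hp2 hr0.le hr1
  have hα0 : 0 < hannerAlpha p r :=
    (Real.rpow_pos_of_pos two_pos _).trans_le (two_rpow_le_hannerAlpha hp1 hp2 hr0.le hr1)
  have hRp : 0 < R ^ p := by positivity
  have hBp : hannerBeta p r * r ^ p * R ^ p ≤ hannerBeta p r * B ^ p := by
    rw [mul_assoc, ← Real.mul_rpow hr0.le hR.le]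
    exact mul_le_mul_of_nonneg_left (Real.rpow_le_rpow (by positivity) hB (by linarith))
      (hannerBeta_nonneg hp1.le hr0.le hr1)
  have hφ := two_add_mul_sq_le_one_add_rpow_add_one_sub_rpow hp1 hp2 hr0.le hr1
  rw [← hannerAlpha_add_hannerBeta_mul_rpow_self hp1 hr0 hr1] at hφ
  have hαA : hannerAlpha p r * A ^ p ≤ (hannerAlpha p r - p * (p - 1) * r ^ 2) * R ^ p := by
    nlinarith [mul_le_mul_of_nonneg_right hφ hRp.le]
  have hcoef : hannerAlpha p r - p * (p - 1) * r ^ 2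
      ≤ hannerAlpha p r * (1 - p * ((p - 1) * r ^ 2 / 2)) := by
    nlinarith [mul_le_mul_of_nonneg_right hα2 (by positivity : 0 ≤ p * (p - 1) * r ^ 2)]
  have hw1 : (p - 1) * r ^ 2 / 2 ≤ 1 := by
    have : (p - 1) * r ^ 2 ≤ 1 := mul_le_one₀ (by linarith) (sq_nonneg r) (pow_le_one₀ hr0.le hr1)
    linarith
  set w := (p - 1) * r ^ 2 / 2
  have hAp : A ^ p ≤ (1 - p * w) * R ^ p := by
    refine le_of_mul_le_mul_left ?_ hα0
    nlinarith [mul_le_mul_of_nonneg_right hcoef hRp.le]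
  have hbern : 1 - p * w ≤ (1 - w) ^ p := by
    simpa [sub_eq_add_neg] using one_add_mul_self_le_rpow_one_add (by linarith : -1 ≤ -w) hp1.le
  have hAp' : A ^ p ≤ ((1 - w) * R) ^ p := by
    rw [Real.mul_rpow (by linarith) hR.le]
    nlinarith
  exact (Real.rpow_le_rpow_iff hA (by nlinarith) (by linarith)).1 hAp'

def IsModulusOfUniformConvexity (E : Type*) [NormedAddCommGroup E] [NormedSpace ℝ E]
    (η : ℝ → ℝ) : Prop :=
  ∀ ⦃R ε : ℝ⦄, 0 < R → 0 < ε → ∀ ⦃a x y : E⦄, dist x a ≤ R → dist y a ≤ R → ε * R ≤ dist x y →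
    dist (midpoint ℝ x y) a ≤ (1 - η ε) * R

namespace MeasureTheory.Lp

variable {α E : Type*} [MeasurableSpace α] {μ : Measure α} [NormedAddCommGroup E] {p : ℝ}
  [Fact (1 ≤ ENNReal.ofReal p)]

theorem integrable_norm_rpow (f : Lp E (ENNReal.ofReal p) μ) :
    Integrable (fun a ↦ ‖f a‖ ^ p) μ := by
  have hp : 0 < p := one_pos.trans_le (ENNReal.one_le_ofReal.1 Fact.out)
  simpa [ENNReal.toReal_ofReal hp.le] using
    (Lp.memLp f).integrable_norm_rpow (by simpa using hp) ENNReal.ofReal_ne_top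

theorem norm_rpow_eq_integral (f : Lp E (ENNReal.ofReal p) μ) :
    ‖f‖ ^ p = ∫ a, ‖f a‖ ^ p ∂μ := by
  have hp : 0 < p := one_pos.trans_le (ENNReal.one_le_ofReal.1 Fact.out)
  rw [Lp.norm_def, (Lp.memLp f).eLpNorm_eq_integral_rpow_norm (by simpa using hp)
    ENNReal.ofReal_ne_top, ENNReal.toReal_ofReal hp.le, ENNReal.toReal_ofReal (by positivity),
    ← Real.rpow_mul (integral_nonneg fun a ↦ by positivity), inv_mul_cancel₀ hp.ne',
    Real.rpow_one]

theorem mul_norm_rpow_add_mul_norm_rpow_le {c d : ℝ}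
    (h : ∀ a b : E, c * ‖a‖ ^ p + d * ‖b‖ ^ p ≤ ‖a + b‖ ^ p + ‖a - b‖ ^ p)
    (f g : Lp E (ENNReal.ofReal p) μ) :
    c * ‖f‖ ^ p + d * ‖g‖ ^ p ≤ ‖f + g‖ ^ p + ‖f - g‖ ^ p := by
  simp only [norm_rpow_eq_integral]
  rw [← integral_const_mul, ← integral_const_mul,
    ← integral_add ((integrable_norm_rpow f).const_mul c) ((integrable_norm_rpow g).const_mul d),
    ← integral_add (integrable_norm_rpow (f + g)) (integrable_norm_rpow (f - g))]
  refine integral_mono_ae (((integrable_norm_rpow f).const_mul c).add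
    ((integrable_norm_rpow g).const_mul d))
    ((integrable_norm_rpow (f + g)).add (integrable_norm_rpow (f - g))) ?_
  filter_upwards [Lp.coeFn_add f g, Lp.coeFn_sub f g] with a hadd hsub
  simpa only [hadd, hsub, Pi.add_apply, Pi.sub_apply] using h (f a) (g a)

theorem hannerAlpha_mul_add_hannerBeta_mul_le {r : ℝ} (hp1 : 1 < p) (hp2 : p ≤ 2) (hr0 : 0 < r)
    (hr1 : r ≤ 1) (f g : Lp ℝ (ENNReal.ofReal p) μ) :
    hannerAlpha p r * ‖f‖ ^ p + hannerBeta p r * ‖g‖ ^ p ≤ ‖f + g‖ ^ p + ‖f - g‖ ^ p :=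
  mul_norm_rpow_add_mul_norm_rpow_le
    (by simpa only [Real.norm_eq_abs] using
      _root_.hannerAlpha_mul_add_hannerBeta_mul_le hp1 hp2 hr0 hr1) f g

theorem isModulusOfUniformConvexity (hp1 : 1 < p) (hp2 : p ≤ 2) :
    IsModulusOfUniformConvexity (Lp ℝ (ENNReal.ofReal p) μ) (fun ε ↦ (p - 1) / 8 * ε ^ 2) := by
  intro R ε hR hε a x y hx hy hxy
  have hε2 : ε / 2 ≤ 1 := by
    have := (dist_triangle_right x y a).trans (add_le_add hx hy)
    nlinarith
  have hsum : (midpoint ℝ x y - a) + (2⁻¹ : ℝ) • (x - y) = x - a := by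
    rw [midpoint_eq_smul_add, invOf_eq_inv]; module
  have hdiff : (midpoint ℝ x y - a) - (2⁻¹ : ℝ) • (x - y) = y - a := by
    rw [midpoint_eq_smul_add, invOf_eq_inv]; module
  have hhanner := hannerAlpha_mul_add_hannerBeta_mul_le (μ := μ) hp1 hp2 (by positivity) hε2
    (midpoint ℝ x y - a) ((2⁻¹ : ℝ) • (x - y))
  rw [hsum, hdiff] at hhanner
  have hpow : ‖x - a‖ ^ p + ‖y - a‖ ^ p ≤ 2 * R ^ p := by
    rw [← _root_.dist_eq_norm, ← _root_.dist_eq_norm]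
    have := Real.rpow_le_rpow dist_nonneg hx (by linarith : 0 ≤ p)
    have := Real.rpow_le_rpow dist_nonneg hy (by linarith : 0 ≤ p)
    linarith
  have hg : ε / 2 * R ≤ ‖(2⁻¹ : ℝ) • (x - y)‖ := by
    rw [norm_smul, Real.norm_of_nonneg (by norm_num), ← _root_.dist_eq_norm]
    linarith
  rw [_root_.dist_eq_norm]
  refine (le_mul_of_hannerAlpha_mul_add_hannerBeta_mul_le hp1 hp2 (by positivity) hε2 hR
    (norm_nonneg _) hg (hhanner.trans hpow)).trans_eq ?_
  ring

end MeasureTheory.Lp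

theorem infDist_segment_lt_of_isModulusOfUniformConvexity {E : Type*} [NormedAddCommGroup E]
    [NormedSpace ℝ E] {c : ℝ} (hE : IsModulusOfUniformConvexity E (fun ε ↦ c * ε ^ 2))
    (hc0 : 0 < c) (hc1 : c ≤ 1) {ε b r₁ r₂ : ℝ} (hε : 0 < ε) (hr₂ : 0 < r₂) (hr₂b : r₂ ≤ b)
    {x y z : E} (hzx : dist z x ≤ r₁) (hzy : dist z y ≤ r₂ + c * ε ^ 2 / (b + ε))
    (hxy : r₁ + r₂ ≤ dist x y) : infDist z (segment ℝ x y) < ε := by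
  by_contra! hfar
  set R := r₂ + c * ε ^ 2 / (b + ε)
  have hbε : 0 < b + ε := by linarith
  have hR : 0 < R := by positivity
  have hr₁ : 0 ≤ r₁ := dist_nonneg.trans hzx
  have hle : r₁ / dist x y ≤ 1 := div_le_one_of_le₀ (by linarith) dist_nonneg
  set m := AffineMap.lineMap x y (r₁ / dist x y)
  have hm : m ∈ segment ℝ x y := by
    rw [segment_eq_image_lineMap]
    exact ⟨_, ⟨by positivity, hle⟩, rfl⟩
  have hmx : dist m x = r₁ := by
    rw [dist_lineMap_left, Real.norm_of_nonneg (by positivity)]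
    exact div_mul_cancel_of_imp fun h ↦ by linarith
  have hmy : dist m y ≤ R := by
    rw [dist_lineMap_right, Real.norm_of_nonneg (sub_nonneg.2 hle), sub_mul, one_mul,
      div_mul_cancel_of_imp fun h ↦ by linarith]
    linarith [dist_triangle_left x y z]
  have hzm : ε ≤ dist z m := hfar.trans (infDist_le_dist_of_mem hm)
  have hqy := hE hR (div_pos hε hR) hzy hmy (by rwa [div_mul_cancel₀ _ hR.ne'])
  have hqx : dist (midpoint ℝ z m) x ≤ r₁ :=
    (convex_closedBall x r₁).segment_subset (mem_closedBall.2 hzx) (mem_closedBall.2 hmx.le)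
      (midpoint_mem_segment z m)
  have hRb : R < b + ε := by
    have : c * ε ^ 2 / (b + ε) < ε := by
      rw [div_lt_iff₀ hbε]
      nlinarith [mul_pos hε (hr₂.trans_le hr₂b), mul_le_mul_of_nonneg_right hc1 (sq_nonneg ε)]
    linarith
  have hΦ : c * ε ^ 2 / (b + ε) < c * ε ^ 2 / R := div_lt_div_of_pos_left (by positivity) hR hRb
  have : r₂ ≤ R - c * ε ^ 2 / R := by
    calc r₂ ≤ dist (midpoint ℝ z m) y := by linarith [dist_triangle_left x y (midpoint ℝ z m)]
      _ ≤ (1 - c * (ε / R) ^ 2) * R := hqy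
      _ = R - c * ε ^ 2 / R := by field_simp
  linarith

/-- For `1 < p ≤ 2`, `Φ(ε,b) = ((p-1)/8) * ε² / (b+ε)` is a modulus of uniform uniqueness
for any `L_p` space over a measurable space. -/
theorem Lp_uniformUniqueness_modulus {α : Type*} [MeasurableSpace α]
    (μ : MeasureTheory.Measure α) (p : ℝ) (hp1 : 1 < p) (hp2 : p ≤ 2)
    [Fact (1 ≤ ENNReal.ofReal p)] :
    ∀ ε > (0:ℝ), ∀ b > (0:ℝ),
      ∀ x y z : MeasureTheory.Lp ℝ (ENNReal.ofReal p) μ,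
        ∀ r₁ ∈ Set.Ioc (0:ℝ) b, ∀ r₂ ∈ Set.Ioc (0:ℝ) b,
          dist z x ≤ r₁ → dist z y ≤ r₂ + (p - 1) / 8 * ε ^ 2 / (b + ε) →
            r₁ + r₂ ≤ dist x y →
              Metric.infDist z (segment ℝ x y) < ε := by
  intro ε hε b _ x y z r₁ _ r₂ hr₂ hzx hzy hxy
  exact infDist_segment_lt_of_isModulusOfUniformConvexity
    (Lp.isModulusOfUniformConvexity hp1 hp2) (by linarith) (by linarith) hε hr₂.1 hr₂.2
    hzx hzy hxy
end

section
/- In any uniquely geodesic space X in which the distance function is convex (i.e., d(z,(1−t)x+ty) ≤ (1−t)d(z,x)+t·d(z,y) for all x,y,z and t∈[0,1]), the betweenness property holds: for pairwise distinct x,y,z,w∈X, if y∈[x,z] and z∈[y,w], then y,z∈[x,w]. -/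
/-!
Write `z = (1 - t) y + t w` with `t = d(y,z) / d(y,w)`. Convexity of `d(x, ·)` along `[y,w]` gives
`d(x,z) ≤ (1 - t) d(x,y) + t d(x,w)`, and since `d(x,z) = d(x,y) + d(y,z)` this rearranges to
`t (d(x,w) - d(x,y) - d(y,z) - d(z,w)) ≥ 0`. So `d(x,w) = d(x,y) + d(y,z) + d(z,w)`, and in a
uniquely geodesic space a point `p` lies on `[x,w]` as soon as `d(x,p) + d(p,w) = d(x,w)`,
because concatenating geodesics `x → p → w` then yields the geodesic from `x` to `w`.
-/

open Metric Set

section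

variable {X : Type*} [MetricSpace X]

namespace IsGeodesic

variable {x y : X} {γ : ℝ → X}

theorem dist_eq_sub (hγ : IsGeodesic x y γ) {s t : ℝ} (hs : s ∈ Icc 0 (dist x y))
    (ht : t ∈ Icc 0 (dist x y)) (hst : s ≤ t) : dist (γ s) (γ t) = t - s := by
  rw [hγ.2.2 s hs t ht, abs_sub_comm, abs_of_nonneg (sub_nonneg.2 hst)]

theorem dist_left_s11 (hγ : IsGeodesic x y γ) {s : ℝ} (hs : s ∈ Icc 0 (dist x y)) :
    dist x (γ s) = s := by
  simpa [hγ.1] using hγ.dist_eq_sub ⟨le_rfl, dist_nonneg⟩ hs hs.1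

theorem dist_right_s11 (hγ : IsGeodesic x y γ) {s : ℝ} (hs : s ∈ Icc 0 (dist x y)) :
    dist (γ s) y = dist x y - s := by
  simpa [hγ.2.1] using hγ.dist_eq_sub hs ⟨dist_nonneg, le_rfl⟩ hs.2

theorem of_dist_le_s11 (h0 : γ 0 = x) (h1 : γ (dist x y) = y)
    (hle : ∀ s ∈ Icc 0 (dist x y), ∀ t ∈ Icc 0 (dist x y), s ≤ t →
      dist (γ s) (γ t) ≤ t - s) :
    IsGeodesic x y γ := by
  have hmem0 : (0 : ℝ) ∈ Icc 0 (dist x y) := ⟨le_rfl, dist_nonneg⟩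
  have hmem1 : dist x y ∈ Icc 0 (dist x y) := ⟨dist_nonneg, le_rfl⟩
  have heq : ∀ s ∈ Icc 0 (dist x y), ∀ t ∈ Icc 0 (dist x y), s ≤ t →
      dist (γ s) (γ t) = t - s := by
    intro s hs t ht hst
    have hxs := hle 0 hmem0 s hs hs.1
    have hty := hle t ht _ hmem1 ht.2
    have hxy := dist_triangle4 (γ 0) (γ s) (γ t) (γ (dist x y))
    rw [h0] at hxs hxy
    rw [h1] at hty hxy
    linarith [hle s hs t ht hst]
  refine ⟨h0, h1, fun s hs t ht => ?_⟩
  rcases le_total s t with hst | hts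
  · rw [heq s hs t ht hst, abs_sub_comm, abs_of_nonneg (sub_nonneg.2 hst)]
  · rw [dist_comm, heq t ht s hs hts, abs_of_nonneg (sub_nonneg.2 hts)]

theorem trans {p : X} {γ₁ γ₂ : ℝ → X} (h₁ : IsGeodesic x p γ₁)
    (h₂ : IsGeodesic p y γ₂)
    (h : dist x p + dist p y = dist x y) :
    IsGeodesic x y (fun s => if s ≤ dist x p then γ₁ s else γ₂ (s - dist x p)) := by
  have hpy := dist_nonneg (x := p) (y := y)
  refine of_dist_le_s11 (by simp only [dist_nonneg, if_true, h₁.1]) ?_ ?_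
  · by_cases hle : dist x y ≤ dist x p
    · rw [if_pos hle, show dist x y = dist x p by linarith, h₁.2.1]
      exact dist_le_zero.1 (by linarith)
    · rw [if_neg hle, show dist x y - dist x p = dist p y by linarith, h₂.2.1]
  · intro s hs t ht hst
    by_cases hta : t ≤ dist x p
    · simp only [hst.trans hta, hta, if_true]
      exact (h₁.dist_eq_sub ⟨hs.1, hst.trans hta⟩ ⟨hs.1.trans hst, hta⟩ hst).le
    have ht' : t - dist x p ∈ Icc 0 (dist p y) := ⟨by linarith, by linarith [ht.2]⟩
    by_cases hsa : s ≤ dist x p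
    · simp only [hsa, hta, if_true, if_false]
      calc dist (γ₁ s) (γ₂ (t - dist x p))
          ≤ dist (γ₁ s) p + dist p (γ₂ (t - dist x p)) := dist_triangle _ _ _
        _ = t - s := by rw [h₁.dist_right_s11 ⟨hs.1, hsa⟩, h₂.dist_left_s11 ht']; ring
    · simp only [hsa, hta, if_false]
      have hs' : s - dist x p ∈ Icc 0 (dist p y) := ⟨by linarith, by linarith [hs.2]⟩
      rw [h₂.dist_eq_sub hs' ht' (by linarith)]
      linarith

end IsGeodesic

variable {seg : X → X → Set X} {x y p q : X}

theorem dist_add_dist_of_mem_seg (hseg : IsSegSystem seg) (hp : p ∈ seg x y) :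
    dist x p + dist p y = dist x y := by
  obtain ⟨γ, hγ, hseg_eq⟩ := hseg x y
  rw [hseg_eq] at hp
  obtain ⟨s, hs, rfl⟩ := hp
  rw [hγ.dist_left_s11 hs, hγ.dist_right_s11 hs]
  ring

theorem eq_of_mem_seg_of_dist_eq (hseg : IsSegSystem seg) (hp : p ∈ seg x y) (hq : q ∈ seg x y)
    (h : dist x p = dist x q) : p = q := by
  obtain ⟨γ, hγ, hseg_eq⟩ := hseg x y
  rw [hseg_eq] at hp hq
  obtain ⟨s, hs, rfl⟩ := hp
  obtain ⟨t, ht, rfl⟩ := hq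
  rw [hγ.dist_left_s11 hs, hγ.dist_left_s11 ht] at h
  rw [h]

theorem seg_eq_image (huniq : UniquelyGeodesic X) (hseg : IsSegSystem seg) {γ : ℝ → X}
    (hγ : IsGeodesic x y γ) : seg x y = γ '' Icc 0 (dist x y) := by
  obtain ⟨γ₀, hγ₀, hseg_eq⟩ := hseg x y
  rw [hseg_eq, ((huniq x y).2 γ₀ γ hγ₀ hγ).image_eq]

theorem mem_seg_iff (huniq : UniquelyGeodesic X) (hseg : IsSegSystem seg) :
    p ∈ seg x y ↔ dist x p + dist p y = dist x y := by
  refine ⟨dist_add_dist_of_mem_seg hseg, fun h => ?_⟩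
  obtain ⟨γ₁, h₁⟩ := (huniq x p).1
  obtain ⟨γ₂, h₂⟩ := (huniq p y).1
  rw [seg_eq_image huniq hseg (h₁.trans h₂ h)]
  refine ⟨dist x p, ⟨dist_nonneg, by linarith [dist_nonneg (x := p) (y := y)]⟩, ?_⟩
  simp only [le_refl, if_true, h₁.2.1]

theorem dist_eq_add_add_of_convex {comb : ℝ → X → X → X} (hseg : IsSegSystem seg)
    (hcomb : IsCombSystem seg comb)
    (hconv : ∀ x y z : X, ∀ t ∈ Icc (0:ℝ) 1,
      dist z (comb t x y) ≤ (1 - t) * dist z x + t * dist z y)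
    {x y z w : X} (hyz : y ≠ z) (hy : y ∈ seg x z) (hz : z ∈ seg y w) :
    dist x w = dist x y + dist y z + dist z w := by
  have hxz := dist_add_dist_of_mem_seg hseg hy
  have hyw := dist_add_dist_of_mem_seg hseg hz
  have hyz_pos : 0 < dist y z := dist_pos.2 hyz
  have hyw_pos : 0 < dist y w := by linarith [dist_nonneg (x := z) (y := w)]
  set t := dist y z / dist y w
  have ht_pos : 0 < t := div_pos hyz_pos hyw_pos
  have htyw : t * dist y w = dist y z := div_mul_cancel₀ _ hyw_pos.ne'
  have ht : t ∈ Icc (0:ℝ) 1 :=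
    ⟨ht_pos.le, div_le_one_of_le₀ (by linarith [dist_nonneg (x := z) (y := w)]) hyw_pos.le⟩
  clear_value t
  obtain ⟨hmem, hdist, -⟩ := hcomb t ht y w
  have hcomb_eq : comb t y w = z :=
    eq_of_mem_seg_of_dist_eq hseg hmem hz (by rw [dist_comm, hdist, htyw])
  have hconvx := hconv y w x t ht
  rw [hcomb_eq] at hconvx
  have hexcess : t * (dist x w - (dist x y + dist y z + dist z w)) =
      (1 - t) * dist x y + t * dist x w - dist x z := by
    linear_combination -hxz - htyw - t * hyw
  have hexcess_nonneg :=
    (mul_nonneg_iff_of_pos_left ht_pos).1 (hexcess ▸ sub_nonneg.2 hconvx)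
  linarith [dist_triangle4 x y z w]

end

/-- In a uniquely geodesic space whose distance function is convex, the betweenness
property holds. -/
theorem convexDist_betweenness {X : Type*} [MetricSpace X]
    (huniq : UniquelyGeodesic X) (seg : X → X → Set X) (hseg : IsSegSystem seg)
    (comb : ℝ → X → X → X) (hcomb : IsCombSystem seg comb)
    (hconv : ∀ x y z : X, ∀ t ∈ Set.Icc (0:ℝ) 1,
      dist z (comb t x y) ≤ (1 - t) * dist z x + t * dist z y) :
    ∀ x y z w : X, x ≠ y → x ≠ z → x ≠ w → y ≠ z → y ≠ w → z ≠ w →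
      y ∈ seg x z → z ∈ seg y w → y ∈ seg x w ∧ z ∈ seg x w := by
  intro x y z w _ _ _ hyz _ _ hy hz
  have hxw := dist_eq_add_add_of_convex hseg hcomb hconv hyz hy hz
  have hxz := dist_add_dist_of_mem_seg hseg hy
  have hyw := dist_add_dist_of_mem_seg hseg hz
  rw [mem_seg_iff huniq hseg, mem_seg_iff huniq hseg]
  constructor <;> linarith
end

section
/- Let (X,d) be a uniformly uniquely geodesic space with a modulus of uniform uniqueness Φ satisfying Φ(ε,b)<ε for all ε,b>0. Let ε,b>0 and x,y,z∈X with max{d(x,y),d(x,z)}≤b and d(y,z)≤(1/2)Φ(ε,b). Then for all t∈[0,1], max{dist(yₜ,[x,z]), dist(zₜ,[x,y])} < ε, where yₜ=(1−t)x+ty and zₜ=(1−t)x+tz. -/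
open Metric Set

/-!
The point `yₜ` is almost between `x` and `z`:
`d(yₜ,x) + d(yₜ,z) ≤ d(x,y) + d(y,z) ≤ d(x,z) + 2 d(y,z) ≤ d(x,z) + Φ(ε,b)`.
Splitting `d(x,z) = r₁ + r₂` with `r₁ = d(yₜ,x)`, the modulus of uniform uniqueness applies;
in the degenerate splittings (`r₁ = 0` or `r₂ ≤ 0`) the point is within `Φ(ε,b) < ε` of an
endpoint of `[x,z]`.
-/

theorem IsSegSystem.left_mem {X : Type*} [MetricSpace X] {seg : X → X → Set X}
    (hseg : IsSegSystem seg) (x y : X) : x ∈ seg x y := by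
  obtain ⟨γ, hγ, hγseg⟩ := hseg x y
  exact hγseg ▸ ⟨0, ⟨le_rfl, dist_nonneg⟩, hγ.1⟩

theorem IsSegSystem.right_mem {X : Type*} [MetricSpace X] {seg : X → X → Set X}
    (hseg : IsSegSystem seg) (x y : X) : y ∈ seg x y := by
  obtain ⟨γ, hγ, hγseg⟩ := hseg x y
  exact hγseg ▸ ⟨dist x y, ⟨dist_nonneg, le_rfl⟩, hγ.2.1⟩

theorem IsCombSystem.dist_add_dist_le {X : Type*} [MetricSpace X] {seg : X → X → Set X}
    {comb : ℝ → X → X → X} (hcomb : IsCombSystem seg comb) {t : ℝ} (ht : t ∈ Set.Icc (0:ℝ) 1)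
    (x y z : X) :
    dist (comb t x y) x + dist (comb t x y) z ≤ dist x z + 2 * dist y z := by
  obtain ⟨-, hx, hy⟩ := hcomb t ht x y
  have hyz := dist_triangle (comb t x y) y z
  have hxy := dist_triangle_right x y z
  linarith

theorem UniqModulus.infDist_lt_of_dist_add_dist_le {X : Type*} [MetricSpace X]
    {seg : X → X → Set X} {Φ : ℝ → ℝ → ℝ} (hΦ : UniqModulus seg Φ) (hseg : IsSegSystem seg)
    {ε b : ℝ} (hε : 0 < ε) (hb : 0 < b) (hΦε : Φ ε b < ε) {x z w : X} (hxz : dist x z ≤ b)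
    (hw : dist w x + dist w z ≤ dist x z + Φ ε b) :
    Metric.infDist w (seg x z) < ε := by
  rcases (dist_nonneg : 0 ≤ dist w x).eq_or_lt with hwx | hwx
  · calc Metric.infDist w (seg x z) ≤ dist w x := infDist_le_dist_of_mem (hseg.left_mem x z)
      _ < ε := hwx ▸ hε
  rcases le_or_gt (dist x z) (dist w x) with hfar | hnear
  · calc Metric.infDist w (seg x z) ≤ dist w z := infDist_le_dist_of_mem (hseg.right_mem x z)
      _ ≤ Φ ε b := by linarith
      _ < ε := hΦε
  · exact hΦ ε hε b hb x z w (dist w x) ⟨hwx, by linarith⟩ (dist x z - dist w x)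
      ⟨by linarith, by linarith⟩ le_rfl (by linarith) (by linarith)

theorem close_geodesics_lemma_general {X : Type*} [MetricSpace X]
    (seg : X → X → Set X) (hseg : IsSegSystem seg)
    (comb : ℝ → X → X → X) (hcomb : IsCombSystem seg comb)
    (Φ : ℝ → ℝ → ℝ) (hΦlt : ∀ ε > (0:ℝ), ∀ b > (0:ℝ), Φ ε b < ε)
    (hΦ : UniqModulus seg Φ)
    (ε b : ℝ) (hε : 0 < ε) (hb : 0 < b) (x y z : X)
    (hxy : dist x y ≤ b) (hxz : dist x z ≤ b) (hyz : dist y z ≤ Φ ε b / 2) :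
    ∀ t ∈ Set.Icc (0:ℝ) 1,
      Metric.infDist (comb t x y) (seg x z) < ε ∧
        Metric.infDist (comb t x z) (seg x y) < ε := by
  intro t ht
  have hΦε := hΦlt ε hε b hb
  constructor
  · refine hΦ.infDist_lt_of_dist_add_dist_le hseg hε hb hΦε hxz ?_
    linarith [hcomb.dist_add_dist_le ht x y z]
  · refine hΦ.infDist_lt_of_dist_add_dist_le hseg hε hb hΦε hxy ?_
    linarith [hcomb.dist_add_dist_le ht x z y, dist_comm y z]

/-- If `d(y,z) ≤ Φ(ε,b)/2` and `x` is within distance `b` of `y` and `z`, then the points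
`yₜ = (1-t)x + ty` and `zₜ = (1-t)x + tz` satisfy
`dist(yₜ,[x,z]) < ε` and `dist(zₜ,[x,y]) < ε`. -/
theorem close_geodesics_lemma {X : Type*} [MetricSpace X]
    (huniq : UniquelyGeodesic X) (seg : X → X → Set X) (hseg : IsSegSystem seg)
    (comb : ℝ → X → X → X) (hcomb : IsCombSystem seg comb)
    (Φ : ℝ → ℝ → ℝ) (hΦlt : ∀ ε > (0:ℝ), ∀ b > (0:ℝ), Φ ε b < ε)
    (hΦ : UniqModulus seg Φ)
    (ε b : ℝ) (hε : 0 < ε) (hb : 0 < b) (x y z : X)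
    (hxy : dist x y ≤ b) (hxz : dist x z ≤ b) (hyz : dist y z ≤ Φ ε b / 2) :
    ∀ t ∈ Set.Icc (0:ℝ) 1,
      Metric.infDist (comb t x y) (seg x z) < ε ∧
        Metric.infDist (comb t x z) (seg x y) < ε :=
  close_geodesics_lemma_general seg hseg comb hcomb Φ hΦlt hΦ ε b hε hb x y z hxy hxz hyz
end

section
/- Let b>0 and (aₙ) be a nonincreasing sequence in [0,b]. Then for every τ>0 and every function g:ℕ→ℕ, there exists I ≤ g̃^(⌈b/τ⌉)(0), where g̃=Id+g, such that for all n,m∈[0,g(I)], |a_{I+n} − a_{I+m}| ≤ τ. -/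
/-!
Put `I k = g̃^[k] 0`. Since `a` is nonincreasing with values in `[0, b]`, the `K = ⌈b/τ⌉` drops
`a (I k) - a (I (k+1))`, `k < K`, telescope to at most `b ≤ K τ`, so one of them is at most `τ`.
For that `k`, all indices `I k + n` with `n ≤ g (I k)` lie in `[I k, I (k+1)]`, on which `a`
varies by at most that drop.
-/

open Finset

theorem Antitone.abs_sub_le_of_mem_Icc {α β : Type*} [AddCommGroup α] [LinearOrder α]
    [IsOrderedAddMonoid α] [Preorder β] {a : β → α} (ha : Antitone a) {i j p q : β}
    (hp : p ∈ Set.Icc i j) (hq : q ∈ Set.Icc i j) : |a p - a q| ≤ a i - a j :=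
  abs_sub_le_iff.mpr ⟨sub_le_sub (ha hp.1) (ha hq.2), sub_le_sub (ha hq.1) (ha hp.2)⟩

theorem exists_sub_succ_le_of_sub_le {x : ℕ → ℝ} {K : ℕ} (hK : 0 < K) {τ : ℝ}
    (h : x 0 - x K ≤ K * τ) : ∃ k < K, x k - x (k + 1) ≤ τ := by
  by_contra! hlt
  have hsum : (K : ℝ) * τ < ∑ k ∈ range K, (x k - x (k + 1)) := by
    simpa using sum_lt_sum_of_nonempty (nonempty_range_iff.mpr hK.ne') fun k hk =>
      hlt k (mem_range.mp hk)
  rw [sum_range_sub'] at hsum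
  linarith

/-- Kohlenbach: quantitative metastability for nonincreasing sequences in `[0,b]`:
for all `τ > 0` and `g : ℕ → ℕ` there is `I ≤ g̃^(⌈b/τ⌉)(0)`, `g̃ = Id + g`, such that
`|a_{I+n} - a_{I+m}| ≤ τ` for all `n, m ∈ [0, g(I)]`. -/
theorem metastability_monotone_seq (b : ℝ) (hb : 0 < b) (a : ℕ → ℝ)
    (hmono : ∀ n, a (n + 1) ≤ a n) (hrange : ∀ n, a n ∈ Set.Icc 0 b) :
    ∀ τ > (0:ℝ), ∀ g : ℕ → ℕ,
      ∃ I ≤ (fun n => n + g n)^[⌈b / τ⌉₊] 0,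
        ∀ n ≤ g I, ∀ m ≤ g I, |a (I + n) - a (I + m)| ≤ τ := by
  intro τ hτ g
  set K := ⌈b / τ⌉₊
  set I : ℕ → ℕ := fun k => (fun n => n + g n)^[k] 0
  have hI_succ (k : ℕ) : I (k + 1) = I k + g (I k) := Function.iterate_succ_apply' _ _ _
  have hI_mono : Monotone I :=
    fun _ _ hkl => Function.monotone_iterate_of_id_le (fun n => Nat.le_add_right n (g n)) hkl 0
  have hK : 0 < K := Nat.ceil_pos.mpr (div_pos hb hτ)
  have hdrop : a (I 0) - a (I K) ≤ K * τ := by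
    have hbK : b ≤ K * τ := (div_le_iff₀ hτ).mp (Nat.le_ceil _)
    linarith [(hrange (I 0)).2, (hrange (I K)).1]
  obtain ⟨k, hkK, hk⟩ := exists_sub_succ_le_of_sub_le (x := a ∘ I) hK hdrop
  refine ⟨I k, hI_mono hkK.le, fun n hn m hm => ?_⟩
  have hmem {p : ℕ} (hp : p ≤ g (I k)) : I k + p ∈ Set.Icc (I k) (I (k + 1)) :=
    ⟨Nat.le_add_right _ _, hI_succ k ▸ Nat.add_le_add_left hp _⟩
  exact ((antitone_nat_of_succ_le hmono).abs_sub_le_of_mem_Icc (hmem hn) (hmem hm)).trans hk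
end

section
/- Quantitative Lion-Man theorem: Let the Lion-Man game be played in a nonempty convex bounded subset A of diameter b ≥ D of a uniquely geodesic space X that is uniformly uniquely geodesic with modulus Φ and satisfies the uniform betweenness property with modulus Θ, where Φ(ε,b)<ε and Θ(ε,a,b)<ε for all ε,a>0. Let N∈ℕ with b+1<ND, set Δ(ε)=Θ(ε,ε,b), Ψ(ε)=Φ(Δ(ε),b)/2, and for α>0 choose 0<ε≤min{1/(3N), D/4, α/3}. Then for all n ≥ N + N·⌈b/Φ(Ψ^N(ε),b)⌉, one has Dₙ = d(Lₙ,Mₙ) < D + α. -/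
open Metric Set

/-!
While the lion is at distance at least `D` from the man it runs straight at him, so
`Dₙ = d(Lₙ, Mₙ)` does not increase, and once `Dₙ < D + α` this persists. If `Dₙ ≥ D + α` up to
time `N + N⌈b/τ⌉` with `τ = Φ(Ψ^N ε, b)`, then, as `D₀ ≤ b`, some block `[m, m + N]` has all its
decrements below `τ`. There the man runs almost straight away from the lion, so uniform
uniqueness puts `Mₖ` near `[Lₖ₊₁, Mₖ₊₁]`; feeding this into the betweenness modulus with the
tolerances `Ψ^(N-t) ε` puts `Lₖ₊₁` near `[Lₖ, Mₖ₊ₜ]`, so the lion's path from `Lₘ` almost lies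
on a geodesic towards `Mₘ₊ₜ`. For `t = N` this gives `d(Lₘ, M_{m+N}) ≥ D_{m+N} + N D - 4ε > b`,
which is impossible in `A`.
-/

section

variable {X : Type*} [MetricSpace X] {seg : X → X → Set X}

namespace IsSegSystem

theorem left_mem_s17 (hseg : IsSegSystem seg) (x y : X) : x ∈ seg x y := by
  obtain ⟨γ, ⟨hγ₀, -, -⟩, hγ⟩ := hseg x y
  exact hγ ▸ ⟨0, ⟨le_rfl, dist_nonneg⟩, hγ₀⟩

theorem dist_add_dist_of_mem (hseg : IsSegSystem seg) {x y p : X} (hp : p ∈ seg x y) :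
    dist x p + dist p y = dist x y := by
  obtain ⟨γ, ⟨hγ₀, hγ₁, hγ⟩, hseg⟩ := hseg x y
  obtain ⟨s, hs, rfl⟩ := hseg ▸ hp
  have hd : (0 : ℝ) ≤ dist x y := dist_nonneg
  have h₀ := hγ 0 ⟨le_rfl, hd⟩ s hs
  have h₁ := hγ s hs (dist x y) ⟨hd, le_rfl⟩
  rw [hγ₀] at h₀
  rw [hγ₁] at h₁
  rw [h₀, h₁, abs_of_nonpos (by linarith [hs.1]), abs_of_nonpos (by linarith [hs.2])]
  ring

theorem dist_add_dist_lt_of_infDist_lt (hseg : IsSegSystem seg) {x y z : X} {e : ℝ}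
    (h : infDist z (seg x y) < e) : dist x z + dist z y < dist x y + 2 * e := by
  obtain ⟨p, hp, hzp⟩ := (infDist_lt_iff ⟨x, hseg.left_mem_s17 x y⟩).1 h
  have hxp := dist_triangle x p z
  have hpy := dist_triangle z p y
  rw [dist_comm p z] at hxp
  linarith [hseg.dist_add_dist_of_mem hp]

end IsSegSystem

theorem BtwModulus.infDist_lt {Θ : ℝ → ℝ → ℝ → ℝ} (hΘ : BtwModulus seg Θ) {S : Set X}
    {ε a b : ℝ} (hε : 0 < ε) (ha : 0 < a) (hb : 0 < b)
    (hS : ∀ u ∈ S, ∀ v ∈ S, dist u v ≤ b) {x y z w : X}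
    (hx : x ∈ S) (hy : y ∈ S) (hz : z ∈ S) (hw : w ∈ S)
    (hxy : a ≤ dist x y) (hxz : a ≤ dist x z) (hxw : a ≤ dist x w)
    (hyz : a ≤ dist y z) (hyw : a ≤ dist y w) (hzw : a ≤ dist z w)
    (hyxz : infDist y (seg x z) < Θ ε a b) (hzyw : infDist z (seg y w) < Θ ε a b) :
    infDist y (seg x w) < ε ∧ infDist z (seg x w) < ε := by
  refine hΘ ε hε a ha b hb x y z w ?_ ?_ hyxz hzyw
  · intro u hu v hv huv
    simp only [mem_insert_iff, mem_singleton_iff] at hu hv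
    rcases hu with rfl | rfl | rfl | rfl <;> rcases hv with rfl | rfl | rfl | rfl <;>
      first | exact absurd rfl huv | assumption | (rw [dist_comm]; assumption)
  · intro u hu v hv
    simp only [mem_insert_iff, mem_singleton_iff] at hu hv
    rcases hu with rfl | rfl | rfl | rfl <;> rcases hv with rfl | rfl | rfl | rfl <;>
      exact hS _ ‹_› _ ‹_›

/-- `tol t` bounds the distance of `L (k + 1)` from `[L k, M (k + t)]` in a block of slow steps.
The doubling keeps the loss `2 (tol 1 + ⋯ + tol t)` of the triangle inequality below `4 tol t`. -/
structure IsBtwSchedule (Θ : ℝ → ℝ → ℝ → ℝ) (b ε : ℝ) (N : ℕ) (tol : ℕ → ℝ) : Prop where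
  pos : ∀ t ≤ N, 0 < tol t
  le : ∀ t ≤ N, tol t ≤ ε
  two_mul_le : ∀ t < N, 2 * tol t ≤ tol (t + 1)
  lt_btw : ∀ t < N, tol t < Θ (tol (t + 1)) (tol (t + 1)) b

theorem isBtwSchedule_iterate {Φ : ℝ → ℝ → ℝ} {Θ : ℝ → ℝ → ℝ → ℝ} {b ε : ℝ}
    (hΦ : ∀ e > 0, 0 < Φ e b ∧ Φ e b < e) (hΘ : ∀ e > 0, 0 < Θ e e b ∧ Θ e e b < e)
    (hε : 0 < ε) (N : ℕ) :
    IsBtwSchedule Θ b ε N (fun t => (fun e => Φ (Θ e e b) b / 2)^[N - t] ε) := by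
  set Ψ : ℝ → ℝ := fun e => Φ (Θ e e b) b / 2
  have hΨ : ∀ e > 0, 0 < Ψ e ∧ 2 * Ψ e < Θ e e b ∧ Θ e e b < e := fun e he => by
    obtain ⟨hΘ₀, hΘ₁⟩ := hΘ e he
    obtain ⟨hΦ₀, hΦ₁⟩ := hΦ _ hΘ₀
    exact ⟨by positivity, by simp only [Ψ]; linarith, hΘ₁⟩
  have hpos : ∀ n, 0 < Ψ^[n] ε ∧ Ψ^[n] ε ≤ ε := by
    intro n
    induction n with
    | zero => exact ⟨hε, le_rfl⟩
    | succ n ih =>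
      obtain ⟨h₀, h₁, h₂⟩ := hΨ _ ih.1
      rw [Function.iterate_succ_apply']
      exact ⟨h₀, by linarith [ih.2]⟩
  have hsucc : ∀ t < N, Ψ^[N - t] ε = Ψ (Ψ^[N - (t + 1)] ε) := fun t ht => by
    rw [← Function.iterate_succ_apply' Ψ]
    congr 1
    omega
  refine ⟨fun t _ => (hpos _).1, fun t _ => (hpos _).2, fun t ht => ?_, fun t ht => ?_⟩ <;>
    obtain ⟨h₀, h₁, h₂⟩ := hΨ _ (hpos (N - (t + 1))).1 <;> simp only [hsucc t ht] <;> linarith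

theorem exists_window_sub_lt {f : ℕ → ℝ} {N K : ℕ} {τ : ℝ}
    (hf : ∀ k < N * (K + 1), f (k + 1) ≤ f k) (hdrop : f 0 - f (N * (K + 1)) < (K + 1) * τ) :
    ∃ m, m + N ≤ N * (K + 1) ∧ ∀ k, m ≤ k → k < m + N → f k - f (k + 1) < τ := by
  by_contra! h
  have hanti : ∀ a c, a ≤ c → c ≤ N * (K + 1) → f c ≤ f a := by
    intro a c hac
    induction c, hac using Nat.le_induction with
    | base => exact fun _ => le_rfl
    | succ c _ ih => exact fun hc => (hf c (by omega)).trans (ih (by omega))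
  have hwindows : ∀ i ≤ K + 1, f (N * i) + i * τ ≤ f 0 := by
    intro i
    induction i with
    | zero => simp
    | succ i ih =>
      intro hi
      have hiN : N * i + N ≤ N * (K + 1) := by
        rw [← mul_add_one]
        exact Nat.mul_le_mul_left N hi
      obtain ⟨k, hk₁, hk₂, hk⟩ := h (N * i) hiN
      have h₁ := hanti (k + 1) (N * (i + 1)) (by rw [mul_add_one]; omega) (by rwa [mul_add_one])
      have h₂ := hanti (N * i) k hk₁ (by omega)
      push_cast
      linarith [ih (by omega)]
  have := hwindows (K + 1) le_rfl
  push_cast at this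
  linarith

structure IsLionManPlay (seg : X → X → Set X) (A : Set X) (D : ℝ) (L M : ℕ → X) : Prop where
  lion_mem : ∀ n, L n ∈ A
  man_mem : ∀ n, M n ∈ A
  lion_mem_seg : ∀ n, L (n + 1) ∈ seg (L n) (M n)
  dist_lion_step : ∀ n, dist (L n) (L (n + 1)) = min D (dist (L n) (M n))
  dist_man_step : ∀ n, dist (M n) (M (n + 1)) ≤ D

namespace IsLionManPlay

variable {A : Set X} {D : ℝ} {L M : ℕ → X}

theorem nonneg (hG : IsLionManPlay seg A D L M) : 0 ≤ D :=
  (le_min_iff.1 ((dist_nonneg).trans_eq (hG.dist_lion_step 0))).1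

theorem dist_lion_step_of_le (hG : IsLionManPlay seg A D L M) {k : ℕ}
    (hk : D ≤ dist (L k) (M k)) : dist (L k) (L (k + 1)) = D := by
  rw [hG.dist_lion_step, min_eq_left hk]

theorem dist_succ_lion_man_of_le (hseg : IsSegSystem seg) (hG : IsLionManPlay seg A D L M)
    {k : ℕ} (hk : D ≤ dist (L k) (M k)) : dist (L (k + 1)) (M k) = dist (L k) (M k) - D := by
  have h := hseg.dist_add_dist_of_mem (hG.lion_mem_seg k)
  rw [hG.dist_lion_step_of_le hk] at h
  linarith

theorem dist_succ_le_of_le (hseg : IsSegSystem seg) (hG : IsLionManPlay seg A D L M) {k : ℕ}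
    (hk : D ≤ dist (L k) (M k)) :
    dist (L (k + 1)) (M (k + 1)) ≤ dist (L k) (M k) - D + dist (M k) (M (k + 1)) :=
  hG.dist_succ_lion_man_of_le hseg hk ▸ dist_triangle _ _ _

theorem dist_succ_le_self_of_le (hseg : IsSegSystem seg) (hG : IsLionManPlay seg A D L M)
    {k : ℕ} (hk : D ≤ dist (L k) (M k)) :
    dist (L (k + 1)) (M (k + 1)) ≤ dist (L k) (M k) := by
  linarith [hG.dist_succ_le_of_le hseg hk, hG.dist_man_step k]

theorem lion_succ_eq_man_of_lt (hseg : IsSegSystem seg) (hG : IsLionManPlay seg A D L M)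
    {k : ℕ} (hk : dist (L k) (M k) < D) : L (k + 1) = M k := by
  have h := hseg.dist_add_dist_of_mem (hG.lion_mem_seg k)
  rw [hG.dist_lion_step, min_eq_right hk.le] at h
  exact dist_eq_zero.1 (by linarith)

theorem dist_lt_of_le (hseg : IsSegSystem seg) (hG : IsLionManPlay seg A D L M) {c : ℝ}
    (hc : D < c) {k n : ℕ} (hk : dist (L k) (M k) < c) (hkn : k ≤ n) :
    dist (L n) (M n) < c := by
  induction n, hkn using Nat.le_induction with
  | base => exact hk
  | succ n _ ih =>
    rcases le_or_gt D (dist (L n) (M n)) with hn | hn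
    · exact (hG.dist_succ_le_self_of_le hseg hn).trans_lt ih
    · rw [hG.lion_succ_eq_man_of_lt hseg hn]
      exact (hG.dist_man_step n).trans_lt hc

theorem infDist_man_lt_of_slow (hseg : IsSegSystem seg) (hG : IsLionManPlay seg A D L M)
    {Φ : ℝ → ℝ → ℝ} (hΦ : UniqModulus seg Φ) {η b : ℝ} (hη : 0 < η) {k : ℕ}
    (hk : D < dist (L k) (M k)) (hkb : dist (L k) (M k) ≤ b) (hΦD : Φ η b ≤ D)
    (hslow : dist (L k) (M k) - dist (L (k + 1)) (M (k + 1)) < Φ η b) :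
    infDist (M k) (seg (L (k + 1)) (M (k + 1))) < η := by
  have hD := hG.nonneg
  have hLM := hG.dist_succ_lion_man_of_le hseg hk.le
  have hmono := hG.dist_succ_le_self_of_le hseg hk.le
  refine hΦ η hη b (by linarith) _ _ _ (dist (L k) (M k) - D) ⟨by linarith, by linarith⟩
    (dist (L (k + 1)) (M (k + 1)) - (dist (L k) (M k) - D)) ⟨by linarith, by linarith⟩
    (by rw [dist_comm, hLM]) (by linarith [hG.dist_man_step k]) (by linarith)

theorem btw_step (hseg : IsSegSystem seg) (hG : IsLionManPlay seg A D L M)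
    {Θ : ℝ → ℝ → ℝ → ℝ} (hΘ : BtwModulus seg Θ) {b : ℝ} (hb : 0 < b)
    (hAb : ∀ u ∈ A, ∀ v ∈ A, dist u v ≤ b) {ε e e' s : ℝ} (he' : 0 < e') (hee' : 2 * e ≤ e')
    (he'ε : e' ≤ ε) (hΘe : e < Θ e' e' b) (hs : 0 ≤ s) {k j : ℕ}
    (hk : D ≤ dist (L k) (M k)) (hj : D + 3 * ε ≤ dist (L j) (M j))
    (hj' : D + 3 * ε ≤ dist (L (j + 1)) (M (j + 1))) (hMM : ε ≤ dist (M j) (M (j + 1)))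
    (hc : dist (L j) (M j) + s * D - 4 * e ≤ dist (L k) (M j))
    (hc' : dist (L (j + 1)) (M (j + 1)) + s * D - 4 * e ≤ dist (L (k + 1)) (M (j + 1)))
    (hin : infDist (L (k + 1)) (seg (L k) (M j)) < e)
    (hin' : infDist (M j) (seg (L (k + 1)) (M (j + 1))) < e) :
    infDist (L (k + 1)) (seg (L k) (M (j + 1))) < e' ∧
      infDist (M j) (seg (L k) (M (j + 1))) < e' ∧
      dist (L (j + 1)) (M (j + 1)) + (s + 1) * D - 4 * e' ≤ dist (L k) (M (j + 1)) := by
  have hLL := hG.dist_lion_step_of_le hk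
  have hMD := hG.dist_man_step j
  have hsD : 0 ≤ s * D := mul_nonneg hs hG.nonneg
  have hxw := dist_triangle (L (k + 1)) (L k) (M (j + 1))
  have hyz := dist_triangle (L (k + 1)) (M j) (M (j + 1))
  rw [dist_comm (L (k + 1)) (L k), hLL] at hxw
  obtain ⟨hP, hQ⟩ := hΘ.infDist_lt he' he' hb hAb (hG.lion_mem k) (hG.lion_mem (k + 1))
    (hG.man_mem j) (hG.man_mem (j + 1)) (by linarith) (by linarith) (by linarith)
    (by linarith) (by linarith) (by linarith) (hin.trans hΘe) (hin'.trans hΘe)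
  refine ⟨hP, hQ, ?_⟩
  have := hseg.dist_add_dist_lt_of_infDist_lt hP
  rw [hLL] at this
  linarith

theorem dist_add_le_of_window (hseg : IsSegSystem seg) (hG : IsLionManPlay seg A D L M)
    {Θ : ℝ → ℝ → ℝ → ℝ} (hΘ : BtwModulus seg Θ) {b : ℝ} (hb : 0 < b)
    (hAb : ∀ u ∈ A, ∀ v ∈ A, dist u v ≤ b) {ε : ℝ} {N : ℕ} {tol : ℕ → ℝ}
    (hsched : IsBtwSchedule Θ b ε N tol) {m : ℕ}
    (hfar : ∀ k, m ≤ k → k ≤ m + N → D + 3 * ε ≤ dist (L k) (M k))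
    (hMM : ∀ k, m ≤ k → k < m + N → ε ≤ dist (M k) (M (k + 1)))
    (hnear : ∀ k, m ≤ k → k < m + N → infDist (M k) (seg (L (k + 1)) (M (k + 1))) < tol 0)
    {k t : ℕ} (hk : m ≤ k) (hkt : k + t ≤ m + N) :
    dist (L (k + t)) (M (k + t)) + t * D - 4 * tol t ≤ dist (L k) (M (k + t)) := by
  have hε : 0 < ε := (hsched.pos 0 (Nat.zero_le _)).trans_le (hsched.le 0 (Nat.zero_le _))
  have hfar' : ∀ k, m ≤ k → k ≤ m + N → D ≤ dist (L k) (M k) := fun k h₁ h₂ => by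
    linarith [hfar k h₁ h₂]
  have key : ∀ t k, m ≤ k → k + t < m + N →
      infDist (L (k + 1)) (seg (L k) (M (k + t + 1))) < tol (t + 1) ∧
      infDist (M (k + t)) (seg (L k) (M (k + t + 1))) < tol (t + 1) ∧
      dist (L (k + t + 1)) (M (k + t + 1)) + (t + 1 : ℝ) * D - 4 * tol (t + 1) ≤
        dist (L k) (M (k + t + 1)) := by
    intro t
    induction t with
    | zero =>
      intro k hk hkN
      have h₀ := hsched.pos 0 (Nat.zero_le _)
      simpa using hG.btw_step hseg hΘ hb hAb (hsched.pos 1 (by omega))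
        (hsched.two_mul_le 0 (by omega)) (hsched.le 1 (by omega)) (hsched.lt_btw 0 (by omega))
        le_rfl (hfar' k hk (by omega)) (hfar k hk (by omega)) (hfar (k + 1) (by omega) (by omega))
        (hMM k hk (by omega)) (by linarith) (by linarith)
        (by rwa [infDist_zero_of_mem (hG.lion_mem_seg k)]) (hnear k hk (by omega))
    | succ t ih =>
      intro k hk hkN
      obtain ⟨hin, -, hc⟩ := ih k hk (by omega)
      obtain ⟨-, hin', hc'⟩ := ih (k + 1) (by omega) (by omega)
      rw [Nat.add_right_comm k 1 t] at hin' hc'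
      have := hG.btw_step hseg hΘ hb hAb (hsched.pos (t + 2) (by omega))
        (hsched.two_mul_le (t + 1) (by omega)) (hsched.le (t + 2) (by omega))
        (hsched.lt_btw (t + 1) (by omega)) (by positivity) (hfar' k hk (by omega))
        (hfar (k + t + 1) (by omega) (by omega)) (hfar (k + t + 2) (by omega) (by omega))
        (hMM (k + t + 1) (by omega) (by omega)) hc hc' hin hin'
      push_cast
      exact this
  rcases t with _ | t
  · simp [(hsched.pos 0 (Nat.zero_le _)).le]
  · exact_mod_cast (key t k hk (by omega)).2.2

theorem exists_dist_lt (hseg : IsSegSystem seg) (hG : IsLionManPlay seg A D L M)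
    {Φ : ℝ → ℝ → ℝ} (hΦ : UniqModulus seg Φ) {Θ : ℝ → ℝ → ℝ → ℝ} (hΘ : BtwModulus seg Θ)
    {b : ℝ} (hb : 0 < b) (hAb : ∀ u ∈ A, ∀ v ∈ A, dist u v ≤ b) {ε : ℝ} {N : ℕ}
    {tol : ℕ → ℝ} (hsched : IsBtwSchedule Θ b ε N tol) (hτ : 0 < Φ (tol 0) b)
    (hτD : Φ (tol 0) b + ε ≤ D) {c : ℝ} (hc : D + 3 * ε ≤ c) (hN : b < N * D) :
    ∃ k ≤ N + N * ⌈b / Φ (tol 0) b⌉₊, dist (L k) (M k) < c := by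
  set τ := Φ (tol 0) b
  set K := ⌈b / τ⌉₊
  have hε : 0 < ε := (hsched.pos 0 (Nat.zero_le _)).trans_le (hsched.le 0 (Nat.zero_le _))
  by_contra! hfar
  rw [show N + N * K = N * (K + 1) by ring] at hfar
  have hKτ : b ≤ K * τ := (div_le_iff₀ hτ).1 (Nat.le_ceil _)
  obtain ⟨m, hmN, hslow⟩ := exists_window_sub_lt (f := fun k => dist (L k) (M k)) (τ := τ)
    (fun k hk => hG.dist_succ_le_self_of_le hseg (by linarith [hfar k hk.le]))
    (by linarith [hAb _ (hG.lion_mem 0) _ (hG.man_mem 0), hfar _ le_rfl])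
  have hfar' : ∀ k, m ≤ k → k ≤ m + N → D + 3 * ε ≤ dist (L k) (M k) :=
    fun k _ hk => hc.trans (hfar k (by omega))
  have hMM : ∀ k, m ≤ k → k < m + N → ε ≤ dist (M k) (M (k + 1)) := fun k h₁ h₂ => by
    linarith [hG.dist_succ_le_of_le hseg (by linarith [hfar' k h₁ h₂.le]), hslow k h₁ h₂]
  have hnear : ∀ k, m ≤ k → k < m + N →
      infDist (M k) (seg (L (k + 1)) (M (k + 1))) < tol 0 := fun k h₁ h₂ =>
    hG.infDist_man_lt_of_slow hseg hΦ (hsched.pos 0 (Nat.zero_le _))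
      (by linarith [hfar' k h₁ h₂.le]) (hAb _ (hG.lion_mem k) _ (hG.man_mem k)) (by linarith)
      (hslow k h₁ h₂)
  have := hG.dist_add_le_of_window hseg hΘ hb hAb hsched hfar' hMM hnear le_rfl le_rfl
  linarith [hAb _ (hG.lion_mem m) _ (hG.man_mem (m + N)), hsched.le N le_rfl,
    hfar' (m + N) (by omega) le_rfl]

end IsLionManPlay

end

theorem lionMan_quantitative_general {X : Type*} [MetricSpace X]
    (seg : X → X → Set X) (hseg : IsSegSystem seg)
    (Φ : ℝ → ℝ → ℝ) (Θ : ℝ → ℝ → ℝ → ℝ)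
    (hΦpos : ∀ ε > (0:ℝ), ∀ b' > (0:ℝ), 0 < Φ ε b')
    (hΘpos : ∀ ε > (0:ℝ), ∀ a > (0:ℝ), ∀ b' > (0:ℝ), 0 < Θ ε a b')
    (hΦ : UniqModulus seg Φ) (hΘ : BtwModulus seg Θ)
    (A : Set X)
    (b D : ℝ) (hD : 0 < D) (hDb : D ≤ b) (hdiam : Metric.diam A = b)
    (hΦb : ∀ ε > (0:ℝ), Φ ε b < ε) (hΘb : ∀ ε > (0:ℝ), ∀ a > (0:ℝ), Θ ε a b < ε)
    (N : ℕ) (hN : b + 1 < N * D)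
    (L M : ℕ → X) (hLA : ∀ n, L n ∈ A) (hMA : ∀ n, M n ∈ A)
    (hlion : ∀ n, L (n + 1) ∈ seg (L n) (M n) ∧
      dist (L n) (L (n + 1)) = min D (dist (L n) (M n)))
    (hman : ∀ n, dist (M n) (M (n + 1)) ≤ D)
    (α ε : ℝ) (hε : 0 < ε)
    (hεle : ε ≤ min ((1:ℝ) / (3 * N)) (min (D / 4) (α / 3))) :
    ∀ n ≥ N + N * ⌈b / Φ ((fun e => Φ (Θ e e b) b / 2)^[N] ε) b⌉₊,
      dist (L n) (M n) < D + α := by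
  have hb : 0 < b := hD.trans_le hDb
  have hAb : ∀ u ∈ A, ∀ v ∈ A, dist u v ≤ b := fun u hu v hv => by
    have hA : Bornology.IsBounded A := by
      by_contra hA
      linarith [diam_eq_zero_of_unbounded hA]
    exact hdiam ▸ dist_le_diam_of_mem hA hu hv
  have hG : IsLionManPlay seg A D L M :=
    ⟨hLA, hMA, fun n => (hlion n).1, fun n => (hlion n).2, hman⟩
  have hεD : ε ≤ D / 4 := hεle.trans ((min_le_right _ _).trans (min_le_left _ _))
  have hεα : ε ≤ α / 3 := hεle.trans ((min_le_right _ _).trans (min_le_right _ _))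
  have hsched := isBtwSchedule_iterate (fun e he => ⟨hΦpos e he b hb, hΦb e he⟩)
    (fun e he => ⟨hΘpos e he e he b hb, hΘb e he e he⟩) hε N
  have hη := hsched.pos 0 (Nat.zero_le _)
  have hηε := hsched.le 0 (Nat.zero_le _)
  intro n hn
  obtain ⟨k, hk, hdk⟩ := hG.exists_dist_lt hseg hΦ hΘ hb hAb hsched (hΦpos _ hη b hb)
    (by linarith [hΦb _ hη]) (c := D + α) (by linarith) (by linarith)
  exact hG.dist_lt_of_le hseg (by linarith) hdk (hk.trans hn)

/-- Quantitative Lion-Man theorem: in a bounded convex domain of diameter `b ≥ D` of a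
uniformly uniquely geodesic space with modulus `Φ` satisfying the uniform betweenness
property with modulus `Θ` (both below the identity at `b`), for `N` with `b + 1 < N·D`,
`Δ(ε) = Θ(ε,ε,b)`, `Ψ(ε) = Φ(Δ(ε),b)/2` and `0 < ε ≤ min{1/(3N), D/4, α/3}`, one has
`Dₙ = d(Lₙ,Mₙ) < D + α` for all `n ≥ N + N·⌈b/Φ(Ψ^N(ε),b)⌉`. -/
theorem lionMan_quantitative {X : Type*} [MetricSpace X]
    (huniq : UniquelyGeodesic X) (seg : X → X → Set X) (hseg : IsSegSystem seg)
    (Φ : ℝ → ℝ → ℝ) (Θ : ℝ → ℝ → ℝ → ℝ)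
    (hΦpos : ∀ ε > (0:ℝ), ∀ b' > (0:ℝ), 0 < Φ ε b')
    (hΘpos : ∀ ε > (0:ℝ), ∀ a > (0:ℝ), ∀ b' > (0:ℝ), 0 < Θ ε a b')
    (hΦ : UniqModulus seg Φ) (hΘ : BtwModulus seg Θ)
    (A : Set X) (hA : A.Nonempty) (hconvA : ∀ x ∈ A, ∀ y ∈ A, seg x y ⊆ A)
    (b D : ℝ) (hD : 0 < D) (hDb : D ≤ b) (hdiam : Metric.diam A = b)
    (hΦb : ∀ ε > (0:ℝ), Φ ε b < ε) (hΘb : ∀ ε > (0:ℝ), ∀ a > (0:ℝ), Θ ε a b < ε)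
    (N : ℕ) (hN : b + 1 < N * D)
    (L M : ℕ → X) (hLA : ∀ n, L n ∈ A) (hMA : ∀ n, M n ∈ A)
    (hlion : ∀ n, L (n + 1) ∈ seg (L n) (M n) ∧
      dist (L n) (L (n + 1)) = min D (dist (L n) (M n)))
    (hman : ∀ n, dist (M n) (M (n + 1)) ≤ D)
    (α ε : ℝ) (hα : 0 < α) (hε : 0 < ε)
    (hεle : ε ≤ min ((1:ℝ) / (3 * N)) (min (D / 4) (α / 3))) :
    ∀ n ≥ N + N * ⌈b / Φ ((fun e => Φ (Θ e e b) b / 2)^[N] ε) b⌉₊,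
      dist (L n) (M n) < D + α :=
  lionMan_quantitative_general seg hseg Φ Θ hΦpos hΘpos hΦ hΘ A b D hD hDb hdiam hΦb hΘb N hN L M
    hLA hMA hlion hman α ε hε hεle
end
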